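/- arXiv:2503.10447 — 9 statements merged into one kernel-verified Lean document; each statement's English description precedes it below -/
import Mathlib

section
/- A tournament D with terminal set T has a T-feedback arc set of size at most k if and only if there exists a linear order σ of V(D) whose cost (the number of backward arcs with respect to σ whose span contains at least one terminal) is at most k. -/
/-- A tournament: irreflexive, and exactly one arc between each pair of distinct vertices. -/
def IsTournament {V : Type} (A : V → V → Prop) : Prop :=
  (∀ v, ¬ A v v) ∧ ∀ u v : V, u ≠ v → (A u v ↔ ¬ A v u)

/-- There is a closed directed walk passing through a terminal of `T` (a `T`-cycle). -/
def HasTCycle {V : Type} (A : V → V → Prop) (T : Set V) : Prop :=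
  ∃ (v : V) (l : List V), List.Chain A v (l ++ [v]) ∧ (v ∈ T ∨ ∃ t ∈ l, t ∈ T)

/-- `S` is a `T`-feedback arc set of the digraph `A`. -/
def IsTFAS {V : Type} (A : V → V → Prop) (T : Set V) (S : Set (V × V)) : Prop :=
  (∀ e ∈ S, A e.1 e.2) ∧ ¬ HasTCycle (fun u w => A u w ∧ (u, w) ∉ S) T

/-- A minimum `T`-feedback arc set. -/
def MinTFAS {V : Type} (A : V → V → Prop) (T : Set V) (S : Set (V × V)) : Prop :=
  IsTFAS A T S ∧ ∀ S' : Set (V × V), IsTFAS A T S' → S.ncard ≤ S'.ncard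

/-- The digraph obtained from `A` by reversing the arc `e`. -/
def revArc {V : Type} (A : V → V → Prop) (e : V × V) : V → V → Prop :=
  fun u w => ((u, w) ≠ e ∧ A u w) ∨ (w, u) = e

/-- `p = (i, j)` is a backward arc w.r.t. the order `σ`: `j < i` and the arc goes
from the `i`-th vertex to the `j`-th vertex. -/
def Backward {n : ℕ} (A : Fin n → Fin n → Prop) (σ : Equiv.Perm (Fin n))
    (p : Fin n × Fin n) : Prop :=
  p.2 < p.1 ∧ A (σ p.1) (σ p.2)

/-- A backward arc whose span contains a terminal (an affected arc), as a pair of positions. -/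
def AffectedPair {n : ℕ} (A : Fin n → Fin n → Prop) (σ : Equiv.Perm (Fin n))
    (T : Set (Fin n)) (p : Fin n × Fin n) : Prop :=
  Backward A σ p ∧ ∃ m : Fin n, p.2 ≤ m ∧ m ≤ p.1 ∧ σ m ∈ T

/-- The cost of an order: the number of affected arcs. -/
noncomputable def cost {n : ℕ} (A : Fin n → Fin n → Prop) (σ : Equiv.Perm (Fin n))
    (T : Set (Fin n)) : ℕ :=
  {p : Fin n × Fin n | AffectedPair A σ T p}.ncard

/-- The interval of positions `[l, r]` contains no terminal. -/
def NonTerm {n : ℕ} (σ : Equiv.Perm (Fin n)) (T : Set (Fin n)) (l r : Fin n) : Prop :=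
  ∀ m : Fin n, l ≤ m → m ≤ r → σ m ∉ T

/-- Number of out-neighbors of the `i`-th vertex among the vertices in positions `[l, r]`. -/
noncomputable def outIn {n : ℕ} (A : Fin n → Fin n → Prop) (σ : Equiv.Perm (Fin n))
    (l r i : Fin n) : ℕ :=
  {m : Fin n | l ≤ m ∧ m ≤ r ∧ A (σ i) (σ m)}.ncard

/-- Number of in-neighbors of the `i`-th vertex among the vertices in positions `[l, r]`. -/
noncomputable def inIn {n : ℕ} (A : Fin n → Fin n → Prop) (σ : Equiv.Perm (Fin n))
    (l r i : Fin n) : ℕ :=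
  {m : Fin n | l ≤ m ∧ m ≤ r ∧ A (σ m) (σ i)}.ncard

/-- A regular order: in each non-terminal interval `[l, r]`, the left endpoint has at least
`⌈(r-l)/2⌉` out-neighbors inside, and the right endpoint at least `⌈(r-l)/2⌉` in-neighbors. -/
def Regular {n : ℕ} (A : Fin n → Fin n → Prop) (σ : Equiv.Perm (Fin n))
    (T : Set (Fin n)) : Prop :=
  ∀ l r : Fin n, l ≤ r → NonTerm σ T l r →
    ((r : ℕ) - (l : ℕ) + 1) / 2 ≤ outIn A σ l r l ∧
    ((r : ℕ) - (l : ℕ) + 1) / 2 ≤ inIn A σ l r r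

/-- A maximal non-terminal interval. -/
def MaxNonTerm {n : ℕ} (σ : Equiv.Perm (Fin n)) (T : Set (Fin n)) (l r : Fin n) : Prop :=
  l ≤ r ∧ NonTerm σ T l r ∧
    ∀ l' r' : Fin n, l' ≤ l → r ≤ r' → NonTerm σ T l' r' → l' = l ∧ r' = r

/-- The `i`-th vertex is rich in `[l, r]`: at least `d` in- and out-neighbors inside. -/
def RichAt {n : ℕ} (A : Fin n → Fin n → Prop) (σ : Equiv.Perm (Fin n)) (d : ℕ)
    (l r i : Fin n) : Prop :=
  d ≤ outIn A σ l r i ∧ d ≤ inIn A σ l r i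

/-- The `i`-th vertex is in-rich in `[l, r]`: at most `d - 1` out-neighbors inside. -/
def InRichAt {n : ℕ} (A : Fin n → Fin n → Prop) (σ : Equiv.Perm (Fin n)) (d : ℕ)
    (l r i : Fin n) : Prop :=
  outIn A σ l r i ≤ d - 1

/-- The `i`-th vertex is out-rich in `[l, r]`: at most `d - 1` in-neighbors inside. -/
def OutRichAt {n : ℕ} (A : Fin n → Fin n → Prop) (σ : Equiv.Perm (Fin n)) (d : ℕ)
    (l r i : Fin n) : Prop :=
  inIn A σ l r i ≤ d - 1

/-- The `i`-th vertex is not an endpoint of any affected arc. -/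
def UnaffectedAt {n : ℕ} (A : Fin n → Fin n → Prop) (σ : Equiv.Perm (Fin n))
    (T : Set (Fin n)) (i : Fin n) : Prop :=
  ∀ p : Fin n × Fin n, AffectedPair A σ T p → p.1 ≠ i ∧ p.2 ≠ i

/-- A directed path (as a list of vertices) from `a` to `b` in the digraph `A`. -/
def DPath {V : Type} (A : V → V → Prop) (a b : V) (p : List V) : Prop :=
  p ≠ [] ∧ p.head? = some a ∧ p.getLast? = some b ∧ p.Chain' A

/-- A path of positions from position `a` to position `b` using only forward arcs of `σ`. -/
def FwdPath {n : ℕ} (A : Fin n → Fin n → Prop) (σ : Equiv.Perm (Fin n))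
    (a b : Fin n) (p : List (Fin n)) : Prop :=
  p ≠ [] ∧ p.head? = some a ∧ p.getLast? = some b ∧
    p.Chain' (fun x y => x < y ∧ A (σ x) (σ y))

/-- The arcs traversed by a path given as a list of vertices. -/
def parcs {V : Type} (p : List V) : List (V × V) := p.zip p.tail

/-- A family of pairwise arc-disjoint paths. -/
def ArcDisjoint {V ι : Type} (P : ι → List V) : Prop :=
  ∀ i j : ι, i ≠ j → ∀ e ∈ parcs (P i), e ∉ parcs (P j)

/-- Reduction Rule 4 (k+1 arc-disjoint forward paths through a terminal above a
backward arc) is applicable. -/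
def RuleKC {n : ℕ} (A : Fin n → Fin n → Prop) (σ : Equiv.Perm (Fin n))
    (T : Set (Fin n)) (k : ℕ) : Prop :=
  ∃ l r : Fin n, l < r ∧ A (σ r) (σ l) ∧ ∃ m : Fin n, l ≤ m ∧ m ≤ r ∧ σ m ∈ T ∧
    ∃ P : Fin (k + 1) → List (Fin n),
      (∀ i, FwdPath A σ l r (P i) ∧ m ∈ P i) ∧ ArcDisjoint P

/-- The digraph has no closed directed walk. -/
def AcyclicRel {V : Type} (A : V → V → Prop) : Prop :=
  ∀ (v : V) (l : List V), ¬ List.Chain A v (l ++ [v])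

/-!
Both directions go through one characterisation: a digraph has no `T`-cycle iff some linear
order of its vertices has no affected arc, i.e. no arc `σ i → σ j` with `j ≤ m ≤ i` for a
terminal `σ m`. Walking along a cycle from a terminal `σ m`, such an order never lets the
position drop back to `m`, so no `T`-cycle survives. Conversely, if there is no `T`-cycle, sort
the vertices by decreasing set of reachable vertices in the colex order: a backward arc then
joins two vertices with the same reachable set, so everything placed between them lies on a
common closed walk with them, and none of it is a terminal.

Hence the affected arcs of any order form a `T`-feedback arc set, and a `T`-feedback arc set `S`
yields an order whose affected arcs all lie in `S`.
-/

open Relation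

theorem List.IsChain.transGen_self_of_mem_cycle {V : Type} {r : V → V → Prop} {v t : V}
    {l : List V} (hc : List.IsChain r (v :: (l ++ [v]))) (ht : t ∈ v :: l) :
    TransGen r t t := by
  obtain ⟨u, l', hl⟩ := List.exists_cons_of_ne_nil (List.concat_ne_nil v l)
  have hc' : List.IsChain r (v :: u :: l') := hl ▸ hc
  have hlast : (u :: l').getLast (List.cons_ne_nil u l') = v := by
    simp only [← hl, List.getLast_concat]
  have hvv : TransGen r v v :=
    TransGen.head' (List.isChain_cons_cons.1 hc').1
      (List.relationReflTransGen_of_exists_isChain_cons l' hc'.tail hlast)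
  have ht' : t ∈ v :: u :: l' := by
    rw [← hl]
    exact List.mem_cons.2 ((List.mem_cons.1 ht).imp_right (List.mem_append_left [v]))
  have to_v : ReflTransGen r t v :=
    hc'.backwards_cons_induction _ _ (by simpa using hlast)
      (fun _ _ hxy hy => ReflTransGen.head hxy hy) ReflTransGen.refl t ht'
  have from_v : ReflTransGen r v t := by
    rcases List.mem_cons.1 ht' with rfl | ht'
    · exact ReflTransGen.refl
    · exact hc'.cons_induction _ _ (fun _ _ hxy hx => ReflTransGen.tail hx hxy)
        ReflTransGen.refl t ht'
  exact TransGen.trans_right to_v (TransGen.trans_left hvv from_v)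

theorem hasTCycle_iff_exists_transGen {V : Type} {r : V → V → Prop} {T : Set V} :
    HasTCycle r T ↔ ∃ t ∈ T, TransGen r t t := by
  constructor
  · rintro ⟨v, l, hc, hv | ⟨t, ht, htT⟩⟩
    · exact ⟨v, hv, List.IsChain.transGen_self_of_mem_cycle hc List.mem_cons_self⟩
    · exact ⟨t, htT, List.IsChain.transGen_self_of_mem_cycle hc (List.mem_cons_of_mem v ht)⟩
  · rintro ⟨t, htT, htt⟩
    obtain ⟨u, htu, hut⟩ := TransGen.head'_iff.1 htt
    obtain ⟨l, hc, hlast⟩ := List.exists_isChain_cons_of_relationReflTransGen hut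
    refine ⟨t, (u :: l).dropLast, ?_, Or.inl htT⟩
    have hsplit := List.dropLast_append_getLast (List.cons_ne_nil u l)
    rw [hlast] at hsplit
    rw [hsplit]
    exact List.isChain_cons_cons.2 ⟨htu, hc⟩

/-- Loops at terminals count as affected arcs here (take `i = j = m`). -/
def NoAffectedArc {ι V : Type} [LinearOrder ι] (r : V → V → Prop) (σ : ι ≃ V) (T : Set V) :
    Prop :=
  ∀ i j m : ι, j ≤ m → m ≤ i → σ m ∈ T → ¬ r (σ i) (σ j)

theorem NoAffectedArc.not_hasTCycle {ι V : Type} [LinearOrder ι] {r : V → V → Prop}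
    {σ : ι ≃ V} {T : Set V} (h : NoAffectedArc r σ T) : ¬ HasTCycle r T := by
  rw [hasTCycle_iff_exists_transGen]
  rintro ⟨t, ht, htt⟩
  obtain ⟨m, rfl⟩ := σ.surjective t
  have step : ∀ x y, m ≤ σ.symm x → r x y → m < σ.symm y := fun x y hx hxy => by
    by_contra! hy
    exact h (σ.symm x) (σ.symm y) m hy hx ht (by simpa using hxy)
  have above : ∀ y, TransGen r (σ m) y → m < σ.symm y := by
    intro y hy
    induction hy with
    | single hxy => exact step _ _ (by simp) hxy
    | tail _ hxy ih => exact step _ _ ih.le hxy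
  simpa using above _ htt

theorem exists_noAffectedArc_of_not_hasTCycle {n : ℕ} {r : Fin n → Fin n → Prop}
    {T : Set (Fin n)} (h : ¬ HasTCycle r T) : ∃ σ : Equiv.Perm (Fin n), NoAffectedArc r σ T := by
  classical
  let reach : Fin n → Finset (Fin n) := fun x => {y | ReflTransGen r x y}
  have mem_reach : ∀ x y, y ∈ reach x ↔ ReflTransGen r x y := by simp [reach]
  let key : Fin n → (Colex (Finset (Fin n)))ᵒᵈ := fun x => OrderDual.toDual (toColex (reach x))
  have key_eq : ∀ x y, key x = key y → reach x = reach y := by simp [key]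
  set σ := Tuple.sort key
  have hmono : Monotone (key ∘ σ) := Tuple.monotone_sort key
  refine ⟨σ, fun i j m hjm hmi hm hij => h ?_⟩
  have hkey : key (σ i) ≤ key (σ j) := Finset.Colex.toColex_le_toColex_of_subset fun y hy =>
    (mem_reach _ _).2 (ReflTransGen.head hij ((mem_reach _ _).1 hy))
  have hmi' : reach (σ m) = reach (σ i) :=
    key_eq _ _ (le_antisymm (hmono hmi) (hkey.trans (hmono hjm)))
  have hjm' : reach (σ j) = reach (σ m) :=
    key_eq _ _ (le_antisymm (hmono hjm) ((hmono hmi).trans hkey))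
  have reach_i : ReflTransGen r (σ m) (σ i) := (mem_reach _ _).1 (hmi' ▸ (mem_reach _ _).2 .refl)
  have reach_m : ReflTransGen r (σ j) (σ m) := (mem_reach _ _).1 (hjm' ▸ (mem_reach _ _).2 .refl)
  exact hasTCycle_iff_exists_transGen.2
    ⟨σ m, hm, TransGen.trans_right reach_i (TransGen.head' hij reach_m)⟩

theorem exists_cost_le_ncard_of_isTFAS {n : ℕ} {A : Fin n → Fin n → Prop} {T : Set (Fin n)}
    {S : Set (Fin n × Fin n)} (hS : IsTFAS A T S) : ∃ σ, cost A σ T ≤ S.ncard := by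
  obtain ⟨σ, hσ⟩ := exists_noAffectedArc_of_not_hasTCycle hS.2
  refine ⟨σ, Set.ncard_le_ncard_of_injOn (Prod.map σ σ) ?_
    (σ.injective.prodMap σ.injective).injOn⟩
  rintro ⟨i, j⟩ ⟨⟨-, hA⟩, m, hjm, hmi, hm⟩
  by_contra hnot
  exact hσ i j m hjm hmi hm ⟨hA, hnot⟩

theorem isTFAS_image_affectedPair {n : ℕ} {A : Fin n → Fin n → Prop} (hirr : ∀ v, ¬ A v v)
    (σ : Equiv.Perm (Fin n)) (T : Set (Fin n)) :
    IsTFAS A T (Prod.map σ σ '' {p | AffectedPair A σ T p}) := by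
  refine ⟨?_, NoAffectedArc.not_hasTCycle (σ := σ) ?_⟩
  · rintro _ ⟨p, hp, rfl⟩
    exact hp.1.2
  · rintro i j m hjm hmi hm ⟨hA, hnot⟩
    rcases (hjm.trans hmi).lt_or_eq with hji | rfl
    · exact hnot ⟨(i, j), ⟨⟨hji, hA⟩, m, hjm, hmi, hm⟩, rfl⟩
    · exact hirr _ hA

/-- A tournament `A` with terminal set `T` has a `T`-feedback arc set of size
at most `k` iff there is an order `σ` of the vertices with `cost σ ≤ k`. -/
theorem stmt0 {n : ℕ} (A : Fin n → Fin n → Prop) (hA : IsTournament A)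
    (T : Set (Fin n)) (k : ℕ) :
    (∃ S : Set (Fin n × Fin n), IsTFAS A T S ∧ S.ncard ≤ k) ↔
      ∃ σ : Equiv.Perm (Fin n), cost A σ T ≤ k := by
  constructor
  · rintro ⟨S, hS, hSk⟩
    obtain ⟨σ, hσ⟩ := exists_cost_le_ncard_of_isTFAS hS
    exact ⟨σ, hσ.trans hSk⟩
  · rintro ⟨σ, hσ⟩
    refine ⟨_, isTFAS_image_affectedPair hA.1 σ T, ?_⟩
    rwa [Set.ncard_image_of_injective _ (σ.injective.prodMap σ.injective)]
end

section
/- Let e be an arc contained in some minimum T-feedback arc set of a tournament D, and let D' be obtained from D by reversing e. Then a set S containing e is a minimum T-feedback arc set of D if and only if S \ {e} is a minimum T-feedback arc set of D'. -/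
section Aux

lemma chain_transGen {V : Type} {B : V → V → Prop} :
    ∀ (l : List V) {x y : V}, List.Chain B x (l ++ [y]) → Relation.TransGen B x y := by
  intro l
  induction l with
  | nil =>
    intro x y h
    simp only [List.Chain, List.nil_append, List.isChain_cons_cons] at h
    exact Relation.TransGen.single h.1
  | cons a t ih =>
    intro x y h
    simp only [List.Chain, List.cons_append, List.isChain_cons_cons] at h
    exact Relation.TransGen.head h.1 (ih h.2)

lemma transGen_chain {V : Type} {B : V → V → Prop} {x y : V}
    (h : Relation.TransGen B x y) : ∃ l, List.Chain B x (l ++ [y]) := by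
  induction h with
  | single h => exact ⟨[], by simp [List.Chain, List.isChain_pair, h]⟩
  | @tail b c _ h2 ih =>
    obtain ⟨l, hl⟩ := ih
    refine ⟨l ++ [b], ?_⟩
    rw [List.append_assoc, List.singleton_append, List.Chain, List.isChain_cons_split]
    exact ⟨hl, List.Chain.cons h2 List.Chain.nil⟩

lemma hasTCycle_iff_transGen {V : Type} {B : V → V → Prop} {T : Set V} :
    HasTCycle B T ↔ ∃ t ∈ T, Relation.TransGen B t t := by
  constructor
  · rintro ⟨v, l, hch, hv | ⟨t, htl, htT⟩⟩
    · exact ⟨v, hv, chain_transGen l hch⟩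
    · obtain ⟨l1, l2, rfl⟩ := List.append_of_mem htl
      rw [List.append_assoc, List.cons_append, List.Chain, List.isChain_cons_split] at hch
      exact ⟨t, htT, (chain_transGen l2 hch.2).trans (chain_transGen l1 hch.1)⟩
  · rintro ⟨t, htT, h⟩
    obtain ⟨l, hl⟩ := transGen_chain h
    exact ⟨t, l, hl, Or.inl htT⟩

lemma hasTCycle_mono {V : Type} {B C : V → V → Prop} (h : ∀ u w, B u w → C u w)
    {T : Set V} : HasTCycle B T → HasTCycle C T := by
  rintro ⟨v, l, hch, ht⟩
  exact ⟨v, l, List.Chain.imp h hch, ht⟩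

lemma transGen_add_arc {V : Type} {B : V → V → Prop} {a b x y : V}
    (h : Relation.TransGen (fun u w => B u w ∨ (u, w) = (a, b)) x y) :
    Relation.TransGen B x y ∨
      (Relation.ReflTransGen B x a ∧ Relation.ReflTransGen B b y) := by
  induction h with
  | single h =>
    rcases h with h | h
    · exact Or.inl (Relation.TransGen.single h)
    · rw [Prod.ext_iff] at h
      obtain ⟨rfl, rfl⟩ := h
      exact Or.inr ⟨Relation.ReflTransGen.refl, Relation.ReflTransGen.refl⟩
  | @tail c d _ h2 ih =>
    rcases h2 with h2 | h2
    · rcases ih with p | ⟨p, q⟩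
      · exact Or.inl (p.tail h2)
      · exact Or.inr ⟨p, q.tail h2⟩
    · rw [Prod.ext_iff] at h2
      obtain ⟨rfl, rfl⟩ := h2
      rcases ih with p | ⟨p, _⟩
      · exact Or.inr ⟨p.to_reflTransGen, Relation.ReflTransGen.refl⟩
      · exact Or.inr ⟨p, Relation.ReflTransGen.refl⟩

lemma no_both {V : Type} {B : V → V → Prop} {T : Set V} {a b : V} (hab : a ≠ b)
    (h0 : ¬ HasTCycle B T)
    (h1 : HasTCycle (fun u w => B u w ∨ (u, w) = (a, b)) T)
    (h2 : HasTCycle (fun u w => B u w ∨ (u, w) = (b, a)) T) : False := by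
  rw [hasTCycle_iff_transGen] at h0 h1 h2
  obtain ⟨t, htT, ht⟩ := h1
  obtain ⟨s, hsT, hs⟩ := h2
  rcases transGen_add_arc ht with h | ⟨hta, hbt⟩
  · exact h0 ⟨t, htT, h⟩
  rcases transGen_add_arc hs with h | ⟨hsb, has⟩
  · exact h0 ⟨s, hsT, h⟩
  have hab' : Relation.TransGen B a b := by
    rcases Relation.reflTransGen_iff_eq_or_transGen.mp (has.trans hsb) with h | h
    · exact absurd h.symm hab
    · exact h
  exact h0 ⟨t, htT, Relation.TransGen.trans_right hta (hab'.trans_left hbt)⟩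

lemma fwd_full {n : ℕ} {A : Fin n → Fin n → Prop} (hA : IsTournament A)
    {T : Set (Fin n)} {e : Fin n × Fin n} {S : Set (Fin n × Fin n)}
    (hS : MinTFAS A T S) (heS : e ∈ S) : MinTFAS (revArc A e) T (S \ {e}) := by
  obtain ⟨e1, e2⟩ := e
  have hAe : A e1 e2 := hS.1.1 (e1, e2) heS
  have hne : e1 ≠ e2 := fun h => hA.1 e2 (h ▸ hAe)
  have hnA' : ¬ A e2 e1 := (hA.2 e1 e2 hne).mp hAe
  have harcs : ∀ f ∈ S \ {(e1, e2)}, revArc A (e1, e2) f.1 f.2 := by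
    rintro f ⟨hfS, hfe⟩
    exact Or.inl ⟨by simpa using hfe, hS.1.1 f hfS⟩
  have hnc : ¬ HasTCycle
      (fun u w => revArc A (e1, e2) u w ∧ (u, w) ∉ S \ {(e1, e2)}) T := by
    intro hcyc
    have hB : ¬ HasTCycle (fun u w => A u w ∧ (u, w) ∉ S) T := hS.1.2
    have h1 : HasTCycle
        (fun u w => (A u w ∧ (u, w) ∉ S) ∨ (u, w) = (e2, e1)) T := by
      refine hasTCycle_mono ?_ hcyc
      rintro u w ⟨h | h, hmem⟩
      · exact Or.inl ⟨h.2, fun hus => hmem ⟨hus, by simpa using h.1⟩⟩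
      · right
        rw [Prod.ext_iff] at h ⊢
        exact ⟨h.2, h.1⟩
    have h2 : HasTCycle
        (fun u w => (A u w ∧ (u, w) ∉ S) ∨ (u, w) = (e1, e2)) T := by
      have hnot : ¬ IsTFAS A T (S \ {(e1, e2)}) := by
        intro hT
        have h1 := hS.2 _ hT
        have hcard := Set.ncard_diff_singleton_add_one heS S.toFinite
        omega
      have hcyc2 : HasTCycle (fun u w => A u w ∧ (u, w) ∉ S \ {(e1, e2)}) T := by
        by_contra hc
        exact hnot ⟨fun f hf => hS.1.1 f hf.1, hc⟩
      refine hasTCycle_mono ?_ hcyc2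
      rintro u w ⟨hA_, hmem⟩
      by_cases huw : (u, w) = (e1, e2)
      · exact Or.inr huw
      · exact Or.inl ⟨hA_, fun h => hmem ⟨h, by simpa using huw⟩⟩
    exact no_both hne hB h2 h1
  refine ⟨⟨harcs, hnc⟩, ?_⟩
  intro S' hS'
  have hS'' : IsTFAS A T (insert (e1, e2) (S' \ {(e2, e1)})) := by
    constructor
    · intro f hf
      rcases Set.mem_insert_iff.mp hf with rfl | ⟨hfS', hfe'⟩
      · exact hAe
      · rcases hS'.1 f hfS' with ⟨_, h⟩ | h
        · exact h
        · exfalso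
          apply hfe'
          have h1 : f.2 = e1 := congrArg Prod.fst h
          have h2 : f.1 = e2 := congrArg Prod.snd h
          simp [Prod.ext_iff, h1, h2]
    · intro hcyc
      apply hS'.2
      refine hasTCycle_mono ?_ hcyc
      rintro u w ⟨hA_, hmem⟩
      have huw_ne : (u, w) ≠ (e1, e2) := by
        intro h
        exact hmem (by rw [h]; exact Set.mem_insert _ _)
      refine ⟨Or.inl ⟨huw_ne, hA_⟩, fun hS'mem => hmem ?_⟩
      refine Set.mem_insert_of_mem _ ⟨hS'mem, ?_⟩
      simp only [Set.mem_singleton_iff]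
      intro h
      apply hnA'
      have h1 : u = e2 := congrArg Prod.fst h
      have h2 : w = e1 := congrArg Prod.snd h
      rw [h1, h2] at hA_
      exact hA_
  have h1 := hS.2 _ hS''
  have h2 : (insert (e1, e2) (S' \ {(e2, e1)})).ncard ≤ (S' \ {(e2, e1)}).ncard + 1 :=
    Set.ncard_insert_le _ _
  have h3 : (S' \ {(e2, e1)}).ncard ≤ S'.ncard :=
    Set.ncard_le_ncard Set.diff_subset S'.toFinite
  have h4 := Set.ncard_diff_singleton_add_one heS S.toFinite
  omega

end Aux

/-- if `e` lies in some minimum `T`-feedback arc set of `A` and `D'` is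
obtained by reversing `e`, then a set `S` containing `e` is a minimum `T`-feedback
arc set of `A` iff `S \ {e}` is a minimum `T`-feedback arc set of `D'`. -/
theorem stmt1 {n : ℕ} (A : Fin n → Fin n → Prop) (hA : IsTournament A)
    (T : Set (Fin n)) (e : Fin n × Fin n)
    (hmin : ∃ S₀ : Set (Fin n × Fin n), MinTFAS A T S₀ ∧ e ∈ S₀)
    (S : Set (Fin n × Fin n)) (heS : e ∈ S) :
    MinTFAS A T S ↔ MinTFAS (revArc A e) T (S \ {e}) := by
  obtain ⟨S₀, hS₀, heS₀⟩ := hmin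
  have hfwd₀ := fwd_full hA hS₀ heS₀
  obtain ⟨e1, e2⟩ := e
  have hAe : A e1 e2 := hS₀.1.1 (e1, e2) heS₀
  have hne : e1 ≠ e2 := fun h => hA.1 e2 (h ▸ hAe)
  have hnA' : ¬ A e2 e1 := (hA.2 e1 e2 hne).mp hAe
  constructor
  · intro h; exact fwd_full hA h heS
  · intro h'
    have hc0 := Set.ncard_diff_singleton_add_one heS₀ S₀.toFinite
    have hcS := Set.ncard_diff_singleton_add_one heS S.toFinite
    have hle : (S \ {(e1, e2)}).ncard ≤ (S₀ \ {(e1, e2)}).ncard := h'.2 _ hfwd₀.1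
    have he' : (e2, e1) ∉ S := by
      intro he'S
      have hTFAS : IsTFAS A T (S \ {(e2, e1)}) := by
        constructor
        · rintro f ⟨hfS, hfe'⟩
          by_cases hfe : f = (e1, e2)
          · rw [hfe]; exact hAe
          · rcases h'.1.1 f ⟨hfS, by simpa using hfe⟩ with ⟨_, h⟩ | h
            · exact h
            · exfalso
              apply hfe'
              have h1 : f.2 = e1 := congrArg Prod.fst h
              have h2 : f.1 = e2 := congrArg Prod.snd h
              simp [Prod.ext_iff, h1, h2]
        · intro hcyc
          apply h'.1.2
          refine hasTCycle_mono ?_ hcyc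
          rintro u w ⟨hA_, hmem⟩
          have hne' : (u, w) ≠ (e2, e1) := by
            intro h
            apply hnA'
            have h1 : u = e2 := congrArg Prod.fst h
            have h2 : w = e1 := congrArg Prod.snd h
            rw [h1, h2] at hA_
            exact hA_
          have hmemS : (u, w) ∉ S := fun hs => hmem ⟨hs, by simpa using hne'⟩
          have hneE : (u, w) ≠ (e1, e2) := fun h => hmemS (by rw [h]; exact heS)
          exact ⟨Or.inl ⟨hneE, hA_⟩, fun hd => hmemS hd.1⟩
      have h5 := hS₀.2 _ hTFAS
      have h6 := Set.ncard_diff_singleton_add_one he'S S.toFinite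
      omega
    refine ⟨⟨?_, ?_⟩, ?_⟩
    · intro f hfS
      by_cases hfe : f = (e1, e2)
      · rw [hfe]; exact hAe
      · rcases h'.1.1 f ⟨hfS, by simpa using hfe⟩ with ⟨_, h⟩ | h
        · exact h
        · exfalso
          apply he'
          have h1 : f.2 = e1 := congrArg Prod.fst h
          have h2 : f.1 = e2 := congrArg Prod.snd h
          have hf' : f = (e2, e1) := Prod.ext_iff.mpr ⟨h2, h1⟩
          rw [← hf']
          exact hfS
    · intro hcyc
      apply h'.1.2
      refine hasTCycle_mono ?_ hcyc
      rintro u w ⟨hA_, hmem⟩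
      have hneE : (u, w) ≠ (e1, e2) := fun h => hmem (by rw [h]; exact heS)
      exact ⟨Or.inl ⟨hneE, hA_⟩, fun hd => hmem hd.1⟩
    · intro S' hS'
      have h5 := hS₀.2 S' hS'
      omega
end

section
/- Let σ be a regular order of a tournament D with terminal set T, with cost at most βk, and suppose the instance is reduced (in particular, no backward arc e = v_r v_l together with k+1 arc-disjoint forward paths from v_l to v_r through a common terminal exists). Then for every terminal t and every affected backward arc e above t with span [v_l, v_r], the terminal t lies within distance ℓ = 2(β+1)k + 2 of one of the endpoints, i.e., t ∈ [v_l, v_{l+ℓ}] or t ∈ [v_{r−ℓ}, v_r]. -/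
lemma exists_inj_fun {n k : ℕ} {S : Set (Fin n)} (h : k + 1 ≤ S.ncard) :
    ∃ f : Fin (k + 1) → Fin n, Function.Injective f ∧ ∀ i, f i ∈ S := by
  classical
  have hfin : S.Finite := Set.toFinite S
  rw [Set.ncard_eq_toFinset_card S hfin] at h
  obtain ⟨t, hts, htc⟩ := Finset.exists_subset_card_eq h
  refine ⟨fun i => (t.orderIsoOfFin htc i : Fin n), ?_, ?_⟩
  · intro i j hij
    exact (t.orderIsoOfFin htc).injective (Subtype.ext hij)
  · intro i
    exact hfin.mem_toFinset.mp (hts (t.orderIsoOfFin htc i).2)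

lemma left_side {n : ℕ} (A : Fin n → Fin n → Prop) (hA : IsTournament A)
    (T : Set (Fin n)) (σ : Equiv.Perm (Fin n)) (β k : ℕ)
    (hreg : Regular A σ T) (hcost : cost A σ T ≤ β * k)
    (l m : Fin n) (hm : σ m ∈ T)
    (hlm : (l : ℕ) + (2 * (β + 1) * k + 2) < (m : ℕ)) :
    k + 1 ≤ {z : Fin n | l < z ∧ z < m ∧ A (σ l) (σ z) ∧ A (σ z) (σ m)}.ncard := by
  classical
  unfold cost at hcost
  have hBk : 2 * (β + 1) * k + 2 = 2 * (β * k) + 2 * k + 2 := by ring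
  rw [hBk] at hlm
  have hlm' : (l : ℕ) < (m : ℕ) := by omega
  obtain ⟨t1, ⟨hlt1, ht1m, ht1T⟩, ht1min⟩ :=
    Set.exists_min_image {p : Fin n | l ≤ p ∧ p ≤ m ∧ σ p ∈ T} id (Set.toFinite _)
      ⟨m, le_of_lt (Fin.lt_def.mpr hlm'), le_refl m, hm⟩
  set Good := {z : Fin n | l < z ∧ z < m ∧ A (σ l) (σ z) ∧ A (σ z) (σ m)} with hGoodDef
  set Bad := {z : Fin n | l < z ∧ z < m ∧ (A (σ m) (σ z) ∨ (t1 < z ∧ A (σ z) (σ l)))} with hBadDef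
  have hBadCost : Bad.ncard ≤ β * k := by
    have hinj : Set.InjOn
        (fun z => if A (σ m) (σ z) then ((m, z) : Fin n × Fin n) else (z, l)) Bad := by
      intro z1 h1 z2 h2 heq
      simp only at heq
      by_cases c1 : A (σ m) (σ z1) <;> by_cases c2 : A (σ m) (σ z2)
      · rw [if_pos c1, if_pos c2] at heq
        exact (Prod.ext_iff.mp heq).2
      · rw [if_pos c1, if_neg c2] at heq
        exact absurd (Prod.ext_iff.mp heq).1 (ne_of_lt h2.2.1).symm
      · rw [if_neg c1, if_pos c2] at heq
        exact absurd (Prod.ext_iff.mp heq).1 (ne_of_lt h1.2.1)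
      · rw [if_neg c1, if_neg c2] at heq
        exact (Prod.ext_iff.mp heq).1
    have himg : (fun z => if A (σ m) (σ z) then ((m, z) : Fin n × Fin n) else (z, l)) '' Bad ⊆
        {p : Fin n × Fin n | AffectedPair A σ T p} := by
      rintro p ⟨z, hz, rfl⟩
      obtain ⟨hz1, hz2, hz3⟩ := hz
      by_cases c : A (σ m) (σ z)
      · simp only [if_pos c]
        exact ⟨⟨hz2, c⟩, m, le_of_lt hz2, le_refl m, hm⟩
      · simp only [if_neg c]
        obtain ⟨ht1z, hzl⟩ := hz3.resolve_left c
        exact ⟨⟨hz1, hzl⟩, t1, hlt1, le_of_lt ht1z, ht1T⟩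
    calc Bad.ncard
        = ((fun z => if A (σ m) (σ z) then ((m, z) : Fin n × Fin n) else (z, l)) '' Bad).ncard :=
          (Set.ncard_image_of_injOn hinj).symm
      _ ≤ β * k := le_trans (Set.ncard_le_ncard himg (Set.toFinite _)) hcost
  have tournM : ∀ z : Fin n, z ≠ m → ¬ A (σ m) (σ z) → A (σ z) (σ m) := by
    intro z hne hnot
    exact (hA.2 (σ z) (σ m) (fun h => hne (σ.injective h))).mpr hnot
  have tournL : ∀ z : Fin n, z ≠ l → ¬ A (σ z) (σ l) → A (σ l) (σ z) := by
    intro z hne hnot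
    exact (hA.2 (σ l) (σ z) (fun h => hne (σ.injective h.symm))).mpr hnot
  have hR2card : (Set.Ioo t1 m).ncard = (m : ℕ) - (t1 : ℕ) - 1 := by
    rw [← Finset.coe_Ioo, Set.ncard_coe_finset, Fin.card_Ioo]
  have hR2sub : Set.Ioo t1 m \ Bad ⊆ Good := by
    rintro z ⟨⟨h1, h2⟩, hnb⟩
    have hlz : l < z := lt_of_le_of_lt hlt1 h1
    have hfz : A (σ z) (σ m) :=
      tournM z (ne_of_lt h2) (fun c => hnb ⟨hlz, h2, Or.inl c⟩)
    have hlz2 : A (σ l) (σ z) :=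
      tournL z (ne_of_gt hlz) (fun c => hnb ⟨hlz, h2, Or.inr ⟨h1, c⟩⟩)
    exact ⟨hlz, h2, hlz2, hfz⟩
  have ht1m' : (t1 : ℕ) ≤ (m : ℕ) := Fin.le_def.mp ht1m
  rcases eq_or_lt_of_le hlt1 with heq | hlt
  · have hcard : (Set.Ioo t1 m).ncard ≤ Good.ncard + Bad.ncard := by
      calc (Set.Ioo t1 m).ncard
          ≤ ((Set.Ioo t1 m \ Bad) ∪ Bad).ncard :=
            Set.ncard_le_ncard (Set.subset_diff_union _ _) (Set.toFinite _)
        _ ≤ (Set.Ioo t1 m \ Bad).ncard + Bad.ncard := Set.ncard_union_le _ _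
        _ ≤ Good.ncard + Bad.ncard :=
            add_le_add_left (Set.ncard_le_ncard hR2sub (Set.toFinite _)) _
    have ht1v : (t1 : ℕ) = (l : ℕ) := congrArg Fin.val heq.symm
    generalize hBg : β * k = B at hBadCost hlm
    omega
  · have hlt' : (l : ℕ) < (t1 : ℕ) := Fin.lt_def.mp hlt
    set y : Fin n := ⟨(t1 : ℕ) - 1, lt_of_le_of_lt (Nat.sub_le _ _) t1.isLt⟩ with hy
    have hyval : (y : ℕ) = (t1 : ℕ) - 1 := rfl
    have hly : l ≤ y := Fin.le_def.mpr (by omega)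
    have hym : (y : ℕ) < (m : ℕ) := by omega
    have hnt : NonTerm σ T l y := by
      intro p hlp hpy hpT
      have hpy' : (p : ℕ) ≤ (y : ℕ) := Fin.le_def.mp hpy
      have hpm : p ≤ m := Fin.le_def.mpr (by omega)
      have h := ht1min p ⟨hlp, hpm, hpT⟩
      simp only [id_eq] at h
      have := Fin.le_def.mp h
      omega
    have hout : ((y : ℕ) - (l : ℕ) + 1) / 2 ≤
        {z : Fin n | l ≤ z ∧ z ≤ y ∧ A (σ l) (σ z)}.ncard := (hreg l y hly hnt).1
    set R1 := {z : Fin n | l ≤ z ∧ z ≤ y ∧ A (σ l) (σ z)} with hR1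
    have hR1sub : R1 \ Bad ⊆ Good := by
      rintro z ⟨⟨hz1, hz2, hz3⟩, hnb⟩
      have hzl : z ≠ l := fun h => hA.1 (σ l) (by rw [h] at hz3; exact hz3)
      have hlz : l < z := lt_of_le_of_ne hz1 (Ne.symm hzl)
      have hzy : (z : ℕ) ≤ (y : ℕ) := Fin.le_def.mp hz2
      have hzm : z < m := Fin.lt_def.mpr (by omega)
      have hfz : A (σ z) (σ m) :=
        tournM z (ne_of_lt hzm) (fun c => hnb ⟨hlz, hzm, Or.inl c⟩)
      exact ⟨hlz, hzm, hz3, hfz⟩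
    have hdisj : Disjoint R1 (Set.Ioo t1 m) := by
      rw [Set.disjoint_left]
      rintro z hz1 ⟨hz2, _⟩
      have h1 : (z : ℕ) ≤ (y : ℕ) := Fin.le_def.mp hz1.2.1
      have h2 : (t1 : ℕ) < (z : ℕ) := Fin.lt_def.mp hz2
      omega
    have hsub : (R1 ∪ Set.Ioo t1 m) \ Bad ⊆ Good := by
      rintro z ⟨hz | hz, hnb⟩
      · exact hR1sub ⟨hz, hnb⟩
      · exact hR2sub ⟨hz, hnb⟩
    have hcard : R1.ncard + (Set.Ioo t1 m).ncard ≤ Good.ncard + Bad.ncard := by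
      calc R1.ncard + (Set.Ioo t1 m).ncard
          = (R1 ∪ Set.Ioo t1 m).ncard :=
            (Set.ncard_union_eq hdisj (Set.toFinite _) (Set.toFinite _)).symm
        _ ≤ ((R1 ∪ Set.Ioo t1 m) \ Bad ∪ Bad).ncard :=
            Set.ncard_le_ncard (Set.subset_diff_union _ _) (Set.toFinite _)
        _ ≤ ((R1 ∪ Set.Ioo t1 m) \ Bad).ncard + Bad.ncard := Set.ncard_union_le _ _
        _ ≤ Good.ncard + Bad.ncard :=
            add_le_add_left (Set.ncard_le_ncard hsub (Set.toFinite _)) _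
    generalize hBg : β * k = B at hBadCost hlm
    omega

lemma right_side {n : ℕ} (A : Fin n → Fin n → Prop) (hA : IsTournament A)
    (T : Set (Fin n)) (σ : Equiv.Perm (Fin n)) (β k : ℕ)
    (hreg : Regular A σ T) (hcost : cost A σ T ≤ β * k)
    (m r : Fin n) (hm : σ m ∈ T)
    (hmr : (m : ℕ) + (2 * (β + 1) * k + 2) < (r : ℕ)) :
    k + 1 ≤ {z : Fin n | m < z ∧ z < r ∧ A (σ m) (σ z) ∧ A (σ z) (σ r)}.ncard := by
  classical
  unfold cost at hcost
  have hBk : 2 * (β + 1) * k + 2 = 2 * (β * k) + 2 * k + 2 := by ring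
  rw [hBk] at hmr
  have hmr' : (m : ℕ) < (r : ℕ) := by omega
  obtain ⟨t2, ⟨hmt2, ht2r, ht2T⟩, ht2max⟩ :=
    Set.exists_max_image {p : Fin n | m ≤ p ∧ p ≤ r ∧ σ p ∈ T} id (Set.toFinite _)
      ⟨m, le_refl m, le_of_lt (Fin.lt_def.mpr hmr'), hm⟩
  set Good := {z : Fin n | m < z ∧ z < r ∧ A (σ m) (σ z) ∧ A (σ z) (σ r)} with hGoodDef
  set Bad := {z : Fin n | m < z ∧ z < r ∧ (A (σ z) (σ m) ∨ (z < t2 ∧ A (σ r) (σ z)))} with hBadDef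
  have hBadCost : Bad.ncard ≤ β * k := by
    have hinj : Set.InjOn
        (fun z => if A (σ z) (σ m) then ((z, m) : Fin n × Fin n) else (r, z)) Bad := by
      intro z1 h1 z2 h2 heq
      simp only at heq
      by_cases c1 : A (σ z1) (σ m) <;> by_cases c2 : A (σ z2) (σ m)
      · rw [if_pos c1, if_pos c2] at heq
        exact (Prod.ext_iff.mp heq).1
      · rw [if_pos c1, if_neg c2] at heq
        exact absurd (Prod.ext_iff.mp heq).1 (ne_of_lt h1.2.1)
      · rw [if_neg c1, if_pos c2] at heq
        exact absurd (Prod.ext_iff.mp heq).1 (ne_of_lt h2.2.1).symm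
      · rw [if_neg c1, if_neg c2] at heq
        exact (Prod.ext_iff.mp heq).2
    have himg : (fun z => if A (σ z) (σ m) then ((z, m) : Fin n × Fin n) else (r, z)) '' Bad ⊆
        {p : Fin n × Fin n | AffectedPair A σ T p} := by
      rintro p ⟨z, hz, rfl⟩
      obtain ⟨hz1, hz2, hz3⟩ := hz
      by_cases c : A (σ z) (σ m)
      · simp only [if_pos c]
        exact ⟨⟨hz1, c⟩, m, le_refl m, le_of_lt hz1, hm⟩
      · simp only [if_neg c]
        obtain ⟨hzt2, hrz⟩ := hz3.resolve_left c
        exact ⟨⟨hz2, hrz⟩, t2, le_of_lt hzt2, ht2r, ht2T⟩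
    calc Bad.ncard
        = ((fun z => if A (σ z) (σ m) then ((z, m) : Fin n × Fin n) else (r, z)) '' Bad).ncard :=
          (Set.ncard_image_of_injOn hinj).symm
      _ ≤ β * k := le_trans (Set.ncard_le_ncard himg (Set.toFinite _)) hcost
  have tournM : ∀ z : Fin n, z ≠ m → ¬ A (σ z) (σ m) → A (σ m) (σ z) := by
    intro z hne hnot
    exact (hA.2 (σ m) (σ z) (fun h => hne (σ.injective h.symm))).mpr hnot
  have tournR : ∀ z : Fin n, z ≠ r → ¬ A (σ r) (σ z) → A (σ z) (σ r) := by
    intro z hne hnot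
    exact (hA.2 (σ z) (σ r) (fun h => hne (σ.injective h))).mpr hnot
  have hR2card : (Set.Ioo m t2).ncard = (t2 : ℕ) - (m : ℕ) - 1 := by
    rw [← Finset.coe_Ioo, Set.ncard_coe_finset, Fin.card_Ioo]
  have hR2sub : Set.Ioo m t2 \ Bad ⊆ Good := by
    rintro z ⟨⟨h1, h2⟩, hnb⟩
    have hzr : z < r := lt_of_lt_of_le h2 ht2r
    have hfz : A (σ m) (σ z) :=
      tournM z (ne_of_gt h1) (fun c => hnb ⟨h1, hzr, Or.inl c⟩)
    have hzr2 : A (σ z) (σ r) :=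
      tournR z (ne_of_lt hzr) (fun c => hnb ⟨h1, hzr, Or.inr ⟨h2, c⟩⟩)
    exact ⟨h1, hzr, hfz, hzr2⟩
  have hmt2' : (m : ℕ) ≤ (t2 : ℕ) := Fin.le_def.mp hmt2
  rcases eq_or_lt_of_le ht2r with heq | hlt
  · have hcard : (Set.Ioo m t2).ncard ≤ Good.ncard + Bad.ncard := by
      calc (Set.Ioo m t2).ncard
          ≤ ((Set.Ioo m t2 \ Bad) ∪ Bad).ncard :=
            Set.ncard_le_ncard (Set.subset_diff_union _ _) (Set.toFinite _)
        _ ≤ (Set.Ioo m t2 \ Bad).ncard + Bad.ncard := Set.ncard_union_le _ _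
        _ ≤ Good.ncard + Bad.ncard :=
            add_le_add_left (Set.ncard_le_ncard hR2sub (Set.toFinite _)) _
    have ht2v : (t2 : ℕ) = (r : ℕ) := congrArg Fin.val heq
    generalize hBg : β * k = B at hBadCost hmr
    omega
  · have hlt' : (t2 : ℕ) < (r : ℕ) := Fin.lt_def.mp hlt
    set y : Fin n := ⟨(t2 : ℕ) + 1, lt_of_le_of_lt hlt' r.isLt⟩ with hy
    have hyval : (y : ℕ) = (t2 : ℕ) + 1 := rfl
    have hyr : y ≤ r := Fin.le_def.mpr (by omega)
    have hmy : (m : ℕ) < (y : ℕ) := by omega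
    have hnt : NonTerm σ T y r := by
      intro p hyp hpr hpT
      have hyp' : (y : ℕ) ≤ (p : ℕ) := Fin.le_def.mp hyp
      have hmp : m ≤ p := Fin.le_def.mpr (by omega)
      have h := ht2max p ⟨hmp, hpr, hpT⟩
      simp only [id_eq] at h
      have := Fin.le_def.mp h
      omega
    have hin : ((r : ℕ) - (y : ℕ) + 1) / 2 ≤
        {z : Fin n | y ≤ z ∧ z ≤ r ∧ A (σ z) (σ r)}.ncard := (hreg y r hyr hnt).2
    set R1 := {z : Fin n | y ≤ z ∧ z ≤ r ∧ A (σ z) (σ r)} with hR1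
    have hR1sub : R1 \ Bad ⊆ Good := by
      rintro z ⟨⟨hz1, hz2, hz3⟩, hnb⟩
      have hzr' : z ≠ r := fun h => hA.1 (σ r) (by rw [h] at hz3; exact hz3)
      have hzr : z < r := lt_of_le_of_ne hz2 hzr'
      have hyz : (y : ℕ) ≤ (z : ℕ) := Fin.le_def.mp hz1
      have hmz : m < z := Fin.lt_def.mpr (by omega)
      have hfz : A (σ m) (σ z) :=
        tournM z (ne_of_gt hmz) (fun c => hnb ⟨hmz, hzr, Or.inl c⟩)
      exact ⟨hmz, hzr, hfz, hz3⟩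
    have hdisj : Disjoint R1 (Set.Ioo m t2) := by
      rw [Set.disjoint_left]
      rintro z hz1 ⟨_, hz2⟩
      have h1 : (y : ℕ) ≤ (z : ℕ) := Fin.le_def.mp hz1.1
      have h2 : (z : ℕ) < (t2 : ℕ) := Fin.lt_def.mp hz2
      omega
    have hsub : (R1 ∪ Set.Ioo m t2) \ Bad ⊆ Good := by
      rintro z ⟨hz | hz, hnb⟩
      · exact hR1sub ⟨hz, hnb⟩
      · exact hR2sub ⟨hz, hnb⟩
    have hcard : R1.ncard + (Set.Ioo m t2).ncard ≤ Good.ncard + Bad.ncard := by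
      calc R1.ncard + (Set.Ioo m t2).ncard
          = (R1 ∪ Set.Ioo m t2).ncard :=
            (Set.ncard_union_eq hdisj (Set.toFinite _) (Set.toFinite _)).symm
        _ ≤ ((R1 ∪ Set.Ioo m t2) \ Bad ∪ Bad).ncard :=
            Set.ncard_le_ncard (Set.subset_diff_union _ _) (Set.toFinite _)
        _ ≤ ((R1 ∪ Set.Ioo m t2) \ Bad).ncard + Bad.ncard := Set.ncard_union_le _ _
        _ ≤ Good.ncard + Bad.ncard :=
            add_le_add_left (Set.ncard_le_ncard hsub (Set.toFinite _)) _
    generalize hBg : β * k = B at hBadCost hmr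
    omega

/-- terminal-location lemma. In a reduced instance with a regular order of
cost at most `β * k`, every terminal below an affected arc with span `[l, r]` lies
within distance `ℓ = 2(β+1)k + 2` of one of the endpoints of the span. -/
theorem stmt4 {n : ℕ} (A : Fin n → Fin n → Prop) (hA : IsTournament A)
    (T : Set (Fin n)) (σ : Equiv.Perm (Fin n)) (β k : ℕ)
    (hreg : Regular A σ T) (hcost : cost A σ T ≤ β * k)
    (hred : ¬ RuleKC A σ T k) :
    ∀ l r : Fin n, l < r → A (σ r) (σ l) →
      ∀ m : Fin n, l ≤ m → m ≤ r → σ m ∈ T →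
        (m : ℕ) ≤ (l : ℕ) + (2 * (β + 1) * k + 2) ∨
        (r : ℕ) ≤ (m : ℕ) + (2 * (β + 1) * k + 2) := by
  intro l r hlr harc m hlm hmr hmT
  by_contra hcon
  push_neg at hcon
  obtain ⟨h1, h2⟩ := hcon
  obtain ⟨fz, hfzinj, hfzmem⟩ := exists_inj_fun (left_side A hA T σ β k hreg hcost l m hmT h1)
  obtain ⟨fy, hfyinj, hfymem⟩ := exists_inj_fun (right_side A hA T σ β k hreg hcost m r hmT h2)
  apply hred
  refine ⟨l, r, hlr, harc, m, hlm, hmr, hmT, fun i => [l, fz i, m, fy i, r], ?_, ?_⟩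
  · intro i
    obtain ⟨hz1, hz2, hz3, hz4⟩ := hfzmem i
    obtain ⟨hy1, hy2, hy3, hy4⟩ := hfymem i
    refine ⟨⟨by simp, rfl, rfl, ?_⟩, by simp⟩
    exact List.isChain_cons_cons.mpr ⟨⟨hz1, hz3⟩, List.isChain_cons_cons.mpr ⟨⟨hz2, hz4⟩,
      List.isChain_cons_cons.mpr ⟨⟨hy1, hy3⟩, List.isChain_cons_cons.mpr ⟨⟨hy2, hy4⟩,
        List.isChain_singleton r⟩⟩⟩⟩
  · intro i j hij e hei hej
    have hzne : (fz i : ℕ) ≠ (fz j : ℕ) := fun h => hij (hfzinj (Fin.val_injective h))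
    have hyne : (fy i : ℕ) ≠ (fy j : ℕ) := fun h => hij (hfyinj (Fin.val_injective h))
    obtain ⟨hzi1, hzi2, -, -⟩ := hfzmem i
    obtain ⟨hzj1, hzj2, -, -⟩ := hfzmem j
    obtain ⟨hyi1, hyi2, -, -⟩ := hfymem i
    obtain ⟨hyj1, hyj2, -, -⟩ := hfymem j
    have f1 : (l : ℕ) < fz i := Fin.lt_def.mp hzi1
    have f2 : (fz i : ℕ) < m := Fin.lt_def.mp hzi2
    have f3 : (l : ℕ) < fz j := Fin.lt_def.mp hzj1
    have f4 : (fz j : ℕ) < m := Fin.lt_def.mp hzj2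
    have f5 : (m : ℕ) < fy i := Fin.lt_def.mp hyi1
    have f6 : (fy i : ℕ) < r := Fin.lt_def.mp hyi2
    have f7 : (m : ℕ) < fy j := Fin.lt_def.mp hyj1
    have f8 : (fy j : ℕ) < r := Fin.lt_def.mp hyj2
    have hpi : parcs [l, fz i, m, fy i, r] =
        [(l, fz i), (fz i, m), (m, fy i), (fy i, r)] := rfl
    have hpj : parcs [l, fz j, m, fy j, r] =
        [(l, fz j), (fz j, m), (m, fy j), (fy j, r)] := rfl
    rw [hpi] at hei
    rw [hpj] at hej
    simp only [List.mem_cons, List.not_mem_nil, or_false] at hei hej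
    obtain rfl | rfl | rfl | rfl := hei <;>
      rcases hej with h | h | h | h <;>
      · obtain ⟨ha, hb⟩ := Prod.ext_iff.mp h
        have ha' := congrArg Fin.val ha
        have hb' := congrArg Fin.val hb
        simp only at ha' hb'
        omega
end

section
/- Let σ be an order with cost ≤ βk of a YES-instance (optimum cost ≤ k), let I be a maximal non-terminal interval of σ with |I| ≥ 2d + 1 where d = (β+2)k + 1, and let σ* be an optimal order. Then every rich or in-rich vertex of I lies to the right of every terminal of I_L in σ*, and every rich or out-rich vertex of I lies to the left of every terminal of I_R in σ*. -/
section Aux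

variable {n : ℕ}

/-- Injecting a set into the affected pairs of `σs` bounds its cardinality by the cost. -/
lemma ncard_le_cost_of_inj (A : Fin n → Fin n → Prop) (σs : Equiv.Perm (Fin n))
    (T : Set (Fin n)) (W : Set (Fin n)) (g : Fin n → Fin n × Fin n)
    (hg : ∀ m ∈ W, AffectedPair A σs T (g m)) (hinj : Set.InjOn g W) :
    W.ncard ≤ cost A σs T :=
  Set.ncard_le_ncard_of_injOn g hg hinj (Set.toFinite _)

lemma pigeon1 (A : Fin n → Fin n → Prop) (σs : Equiv.Perm (Fin n)) (T : Set (Fin n))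
    (k : ℕ) (hk : cost A σs T ≤ k) (pt pv : Fin n) (hT : σs pt ∈ T) (hvt : pv < pt)
    (W : Set (Fin n)) (f : Fin n → Fin n) (hf : Function.Injective f)
    (h1 : ∀ m ∈ W, f m < pt → A (σs pt) (σs (f m)))
    (h2 : ∀ m ∈ W, pt < f m → A (σs (f m)) (σs pv))
    (hne : ∀ m ∈ W, f m ≠ pt) : W.ncard ≤ 2 * k := by
  set W1 := {m ∈ W | f m < pt} with hW1
  set W2 := {m ∈ W | pt < f m} with hW2
  have hsub : W ⊆ W1 ∪ W2 := by
    intro m hm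
    rcases lt_trichotomy (f m) pt with h | h | h
    · exact Or.inl ⟨hm, h⟩
    · exact absurd h (hne m hm)
    · exact Or.inr ⟨hm, h⟩
  have hb1 : W1.ncard ≤ k := by
    refine le_trans (ncard_le_cost_of_inj A σs T W1 (fun m => (pt, f m)) ?_ ?_) hk
    · rintro m ⟨hm, hlt⟩
      exact ⟨⟨hlt, h1 m hm hlt⟩, pt, le_of_lt hlt, le_refl _, hT⟩
    · intro a _ b _ hab
      exact hf (congrArg Prod.snd hab)
  have hb2 : W2.ncard ≤ k := by
    refine le_trans (ncard_le_cost_of_inj A σs T W2 (fun m => (f m, pv)) ?_ ?_) hk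
    · rintro m ⟨hm, hlt⟩
      exact ⟨⟨lt_trans hvt hlt, h2 m hm hlt⟩, pt, le_of_lt hvt, le_of_lt hlt, hT⟩
    · intro a _ b _ hab
      exact hf (congrArg Prod.fst hab)
  calc W.ncard ≤ (W1 ∪ W2).ncard := Set.ncard_le_ncard hsub (Set.toFinite _)
    _ ≤ W1.ncard + W2.ncard := Set.ncard_union_le _ _
    _ ≤ 2 * k := by omega

lemma pigeon2 (A : Fin n → Fin n → Prop) (σs : Equiv.Perm (Fin n)) (T : Set (Fin n))
    (k : ℕ) (hk : cost A σs T ≤ k) (pt pv : Fin n) (hT : σs pt ∈ T) (hvt : pt < pv)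
    (W : Set (Fin n)) (f : Fin n → Fin n) (hf : Function.Injective f)
    (h1 : ∀ m ∈ W, f m < pt → A (σs pv) (σs (f m)))
    (h2 : ∀ m ∈ W, pt < f m → A (σs (f m)) (σs pt))
    (hne : ∀ m ∈ W, f m ≠ pt) : W.ncard ≤ 2 * k := by
  set W1 := {m ∈ W | f m < pt} with hW1
  set W2 := {m ∈ W | pt < f m} with hW2
  have hsub : W ⊆ W1 ∪ W2 := by
    intro m hm
    rcases lt_trichotomy (f m) pt with h | h | h
    · exact Or.inl ⟨hm, h⟩
    · exact absurd h (hne m hm)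
    · exact Or.inr ⟨hm, h⟩
  have hb1 : W1.ncard ≤ k := by
    refine le_trans (ncard_le_cost_of_inj A σs T W1 (fun m => (pv, f m)) ?_ ?_) hk
    · rintro m ⟨hm, hlt⟩
      exact ⟨⟨lt_trans hlt hvt, h1 m hm hlt⟩, pt, le_of_lt hlt, le_of_lt hvt, hT⟩
    · intro a _ b _ hab
      exact hf (congrArg Prod.snd hab)
  have hb2 : W2.ncard ≤ k := by
    refine le_trans (ncard_le_cost_of_inj A σs T W2 (fun m => (f m, pt)) ?_ ?_) hk
    · rintro m ⟨hm, hlt⟩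
      exact ⟨⟨hlt, h2 m hm hlt⟩, pt, le_refl _, le_of_lt hlt, hT⟩
    · intro a _ b _ hab
      exact hf (congrArg Prod.fst hab)
  calc W.ncard ≤ (W1 ∪ W2).ncard := Set.ncard_le_ncard hsub (Set.toFinite _)
    _ ≤ W1.ncard + W2.ncard := Set.ncard_union_le _ _
    _ ≤ 2 * k := by omega

/-- In a tournament, a vertex of the interval sees every other interval vertex. -/
lemma in_add_out (A : Fin n → Fin n → Prop) (hA : IsTournament A)
    (σ : Equiv.Perm (Fin n)) {l r i : Fin n} (hl : l ≤ i) (hr : i ≤ r) :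
    (r : ℕ) - (l : ℕ) ≤ inIn A σ l r i + outIn A σ l r i := by
  have hIcc : (Set.Icc l r).ncard = (r : ℕ) + 1 - (l : ℕ) := by
    rw [← Finset.coe_Icc, Set.ncard_coe_finset, Fin.card_Icc]
  have hi : i ∈ Set.Icc l r := ⟨hl, hr⟩
  have hS : (Set.Icc l r \ {i}).ncard = (r : ℕ) + 1 - (l : ℕ) - 1 := by
    rw [Set.ncard_diff_singleton_of_mem hi, hIcc]
  have hsub : Set.Icc l r \ {i} ⊆
      {m : Fin n | l ≤ m ∧ m ≤ r ∧ A (σ m) (σ i)} ∪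
      {m : Fin n | l ≤ m ∧ m ≤ r ∧ A (σ i) (σ m)} := by
    rintro m ⟨⟨h1, h2⟩, hne⟩
    have hne' : σ m ≠ σ i := fun h => hne (σ.injective h)
    by_cases h : A (σ m) (σ i)
    · exact Or.inl ⟨h1, h2, h⟩
    · exact Or.inr ⟨h1, h2, (hA.2 (σ i) (σ m) hne'.symm).mpr h⟩
  have h1 := Set.ncard_le_ncard hsub (Set.toFinite _)
  have h2 := Set.ncard_union_le {m : Fin n | l ≤ m ∧ m ≤ r ∧ A (σ m) (σ i)}
      {m : Fin n | l ≤ m ∧ m ≤ r ∧ A (σ i) (σ m)}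
  have hlr : (l : ℕ) ≤ (r : ℕ) := le_trans hl hr
  unfold inIn outIn
  omega

/-- At most `cost` interval vertices fail to be unaffected. -/
lemma unaff_count (A : Fin n → Fin n → Prop) (σ : Equiv.Perm (Fin n)) (T : Set (Fin n))
    {l r : Fin n} (hnt : NonTerm σ T l r) (Q : Fin n → Prop) :
    {m : Fin n | l ≤ m ∧ m ≤ r ∧ Q m}.ncard ≤
      {m : Fin n | l ≤ m ∧ m ≤ r ∧ Q m ∧ UnaffectedAt A σ T m}.ncard + cost A σ T := by
  classical
  set S := {m : Fin n | l ≤ m ∧ m ≤ r ∧ Q m} with hSdef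
  set W := {m : Fin n | l ≤ m ∧ m ≤ r ∧ Q m ∧ UnaffectedAt A σ T m} with hWdef
  have hsub : S ⊆ W ∪ (S \ W) := by
    intro m hm
    by_cases h : m ∈ W
    · exact Or.inl h
    · exact Or.inr ⟨hm, h⟩
  have hdiff : (S \ W).ncard ≤ cost A σ T := by
    have hex : ∀ m ∈ S \ W, ∃ p : Fin n × Fin n,
        AffectedPair A σ T p ∧ (p.1 = m ∨ p.2 = m) := by
      rintro m ⟨hmS, hmW⟩
      have : ¬ UnaffectedAt A σ T m := by
        intro h
        exact hmW ⟨hmS.1, hmS.2.1, hmS.2.2, h⟩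
      unfold UnaffectedAt at this
      push_neg at this
      obtain ⟨p, hp, hp2⟩ := this
      refine ⟨p, hp, ?_⟩
      by_cases h1 : p.1 = m
      · exact Or.inl h1
      · exact Or.inr (hp2 h1)
    choose! g hg1 hg2 using hex
    refine ncard_le_cost_of_inj A σ T _ g hg1 ?_
    intro a ha b hb hab
    by_contra hne
    -- both endpoints of the common pair lie in [l,r], so its terminal is in [l,r]
    have ha' := hg2 a ha
    have hb' := hg2 b hb; rw [← hab] at hb'
    have hP := hg1 a ha
    obtain ⟨hback, mT, hm1, hm2, hmT⟩ := hP
    have haI : l ≤ a ∧ a ≤ r := ⟨ha.1.1, ha.1.2.1⟩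
    have hbI : l ≤ b ∧ b ≤ r := ⟨hb.1.1, hb.1.2.1⟩
    have hends : (l ≤ (g a).1 ∧ (g a).1 ≤ r) ∧ (l ≤ (g a).2 ∧ (g a).2 ≤ r) := by
      rcases ha' with h | h <;> rcases hb' with h' | h'
      · exact absurd (h.symm.trans h') hne
      · exact ⟨by rw [h]; exact haI, by rw [h']; exact hbI⟩
      · exact ⟨by rw [h']; exact hbI, by rw [h]; exact haI⟩
      · exact absurd (h.symm.trans h') hne
    exact hnt mT (le_trans hends.2.1 hm1) (le_trans hm2 hends.1.2) hmT
  have h1 := Set.ncard_le_ncard hsub (Set.toFinite _)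
  have h2 := Set.ncard_union_le W (S \ W)
  omega

/-- An unaffected interval vertex receives an arc from every terminal on the left. -/
lemma arc_from_left (A : Fin n → Fin n → Prop) (hA : IsTournament A)
    (σ : Equiv.Perm (Fin n)) (T : Set (Fin n)) {l j m : Fin n} (hj : j < l)
    (hT : σ j ∈ T) (hm : l ≤ m) (hun : UnaffectedAt A σ T m) : A (σ j) (σ m) := by
  have hjm : j < m := lt_of_lt_of_le hj hm
  have hne : σ m ≠ σ j := fun h => absurd (σ.injective h) (ne_of_gt hjm)
  by_contra h
  have harc : A (σ m) (σ j) := (hA.2 (σ m) (σ j) hne).mpr h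
  have : AffectedPair A σ T (m, j) := ⟨⟨hjm, harc⟩, j, le_refl _, le_of_lt hjm, hT⟩
  exact (hun (m, j) this).1 rfl

/-- An unaffected interval vertex sends an arc to every terminal on the right. -/
lemma arc_to_right (A : Fin n → Fin n → Prop) (hA : IsTournament A)
    (σ : Equiv.Perm (Fin n)) (T : Set (Fin n)) {r j m : Fin n} (hj : r < j)
    (hT : σ j ∈ T) (hm : m ≤ r) (hun : UnaffectedAt A σ T m) : A (σ m) (σ j) := by
  have hmj : m < j := lt_of_le_of_lt hm hj
  have hne : σ j ≠ σ m := fun h => absurd (σ.injective h) (ne_of_gt hmj)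
  by_contra h
  have harc : A (σ j) (σ m) := (hA.2 (σ j) (σ m) hne).mpr h
  have : AffectedPair A σ T (j, m) := ⟨⟨hmj, harc⟩, j, le_of_lt hmj, le_refl _, hT⟩
  exact (hun (j, m) this).2 rfl

end Aux

/-- with `d = (β+2)k + 1`, if `σ` has cost at most `βk`, the instance is a
YES-instance, `σ*` is optimal, and `I = [l, r]` is a maximal non-terminal interval of `σ`
of length at least `2d + 1`, then in `σ*` every rich or in-rich vertex of `I` lies to the
right of every terminal of `I_L`, and every rich or out-rich vertex of `I` lies to the
left of every terminal of `I_R`. -/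
theorem stmt10 {n : ℕ} (A : Fin n → Fin n → Prop) (hA : IsTournament A)
    (T : Set (Fin n)) (β k : ℕ) (σ σs : Equiv.Perm (Fin n))
    (hcost : cost A σ T ≤ β * k)
    (hyes : ∃ τ : Equiv.Perm (Fin n), cost A τ T ≤ k)
    (hopt : ∀ τ : Equiv.Perm (Fin n), cost A σs T ≤ cost A τ T)
    (l r : Fin n) (hmax : MaxNonTerm σ T l r)
    (hlen : 2 * ((β + 2) * k + 1) + 1 ≤ (r : ℕ) - (l : ℕ) + 1) :
    (∀ i : Fin n, l ≤ i → i ≤ r →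
      (RichAt A σ ((β + 2) * k + 1) l r i ∨ InRichAt A σ ((β + 2) * k + 1) l r i) →
      ∀ j : Fin n, j < l → σ j ∈ T → σs.symm (σ j) < σs.symm (σ i)) ∧
    (∀ i : Fin n, l ≤ i → i ≤ r →
      (RichAt A σ ((β + 2) * k + 1) l r i ∨ OutRichAt A σ ((β + 2) * k + 1) l r i) →
      ∀ j : Fin n, r < j → σ j ∈ T → σs.symm (σ i) < σs.symm (σ j)) := by
  classical
  obtain ⟨τ, hτ⟩ := hyes
  have hks : cost A σs T ≤ k := le_trans (hopt τ) hτ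
  set d := (β + 2) * k + 1 with hd
  obtain ⟨hlr, hnt, -⟩ := hmax
  have hinj : Function.Injective (fun m : Fin n => σs.symm (σ m)) :=
    fun a b h => σ.injective (σs.symm.injective h)
  constructor
  · intro i hli hir hrich j hjl hjT
    -- lower bound on in-neighbors
    have hio := in_add_out A hA σ hli hir
    have hin : d ≤ inIn A σ l r i := by
      rcases hrich with h | h
      · exact h.2
      · unfold InRichAt at h; omega
    set W := {m : Fin n | l ≤ m ∧ m ≤ r ∧ A (σ m) (σ i) ∧ UnaffectedAt A σ T m} with hW
    have hWc : 2 * k + 1 ≤ W.ncard := by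
      have h2 := unaff_count A σ T hnt (fun m => A (σ m) (σ i))
      beta_reduce at h2
      rw [← hW] at h2
      unfold inIn at hin
      have hdist : (β + 2) * k = β * k + 2 * k := by ring
      omega
    set pt := σs.symm (σ j) with hpt
    set pv := σs.symm (σ i) with hpv
    have hne : pt ≠ pv := by
      intro h
      have h2 := congrArg σs h
      rw [hpt, hpv] at h2
      simp only [Equiv.apply_symm_apply] at h2
      exact absurd (σ.injective h2) (ne_of_lt (lt_of_lt_of_le hjl hli))
    by_contra hcon
    have hvt : pv < pt := by
      rcases lt_trichotomy pt pv with h | h | h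
      · exact absurd h hcon
      · exact absurd h hne
      · exact h
    have hbound := pigeon1 A σs T k hks pt pv (by simp [hpt, hjT]) hvt W
      (fun m => σs.symm (σ m)) hinj
      (fun m hm _ => by
        simpa [hpt] using arc_from_left A hA σ T hjl hjT hm.1 hm.2.2.2)
      (fun m hm _ => by simpa [hpv] using hm.2.2.1)
      (fun m hm h => by
        have : σ m = σ j := by
          have := congrArg σs h
          simpa [hpt] using this
        exact absurd (σ.injective this) (ne_of_gt (lt_of_lt_of_le hjl hm.1)))
    omega
  · intro i hli hir hrich j hrj hjT
    have hio := in_add_out A hA σ hli hir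
    have hout : d ≤ outIn A σ l r i := by
      rcases hrich with h | h
      · exact h.1
      · unfold OutRichAt at h; omega
    set W := {m : Fin n | l ≤ m ∧ m ≤ r ∧ A (σ i) (σ m) ∧ UnaffectedAt A σ T m} with hW
    have hWc : 2 * k + 1 ≤ W.ncard := by
      have h2 := unaff_count A σ T hnt (fun m => A (σ i) (σ m))
      beta_reduce at h2
      rw [← hW] at h2
      unfold outIn at hout
      have hdist : (β + 2) * k = β * k + 2 * k := by ring
      omega
    set pt := σs.symm (σ j) with hpt
    set pv := σs.symm (σ i) with hpv
    have hne : pt ≠ pv := by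
      intro h
      have h2 := congrArg σs h
      rw [hpt, hpv] at h2
      simp only [Equiv.apply_symm_apply] at h2
      exact absurd (σ.injective h2) (ne_of_gt (lt_of_le_of_lt hir hrj))
    by_contra hcon
    have hvt : pt < pv := by
      rcases lt_trichotomy pv pt with h | h | h
      · exact absurd h hcon
      · exact absurd h.symm hne
      · exact h
    have hbound := pigeon2 A σs T k hks pt pv (by simp [hpt, hjT]) hvt W
      (fun m => σs.symm (σ m)) hinj
      (fun m hm _ => by simpa [hpv] using hm.2.2.1)
      (fun m hm _ => by
        simpa [hpt] using arc_to_right A hA σ T hrj hjT hm.2.1 hm.2.2.2)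
      (fun m hm h => by
        have : σ m = σ j := by
          have := congrArg σs h
          simpa [hpt] using this
        exact absurd (σ.injective this) (ne_of_lt (lt_of_le_of_lt hm.2.1 hrj)))
    omega
end

section
/- Let D be a tournament with terminal set T, σ an order with cost ≤ βk, I a maximal non-terminal interval of σ with |I| ≥ 2d+1 and containing at least k+1 rich vertices, where d = (β+2)k+1. If the instance is a YES-instance, then for any optimal order σ*, there exists a maximal non-terminal interval I* of σ* with I*-partition (I*_L, I*, I*_R) such that: (a) T ∩ I_L ⊆ I*_L and T ∩ I_R ⊆ I*_R; (b) all rich vertices of I belong to I*; (c) no out-rich vertex of I belongs to I*_R and no in-rich vertex of I belongs to I*_L; and (d) I_L ∩ I*_R = ∅ and I_R ∩ I*_L = ∅. -/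
lemma count_le {n : ℕ} {A : Fin n → Fin n → Prop} {σ : Equiv.Perm (Fin n)}
    {T : Set (Fin n)} {S : Set (Fin n)} (f : Fin n → Fin n × Fin n)
    (hf : ∀ m ∈ S, AffectedPair A σ T (f m)) (hinj : Set.InjOn f S) :
    S.ncard ≤ cost A σ T := by
  have h1 : f '' S ⊆ {p | AffectedPair A σ T p} := by
    rintro p ⟨m, hm, rfl⟩; exact hf m hm
  calc S.ncard = (f '' S).ncard := (Set.ncard_image_of_injOn hinj).symm
    _ ≤ _ := Set.ncard_le_ncard h1 (Set.toFinite _)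

lemma UR {n : ℕ} {A : Fin n → Fin n → Prop} (hA : IsTournament A) {T : Set (Fin n)}
    {σ σs : Equiv.Perm (Fin n)} {l r j q : Fin n}
    (hterm : ∃ w, r < w ∧ w ≤ j ∧ σ w ∈ T)
    (hq : σs q ∈ T) (hjq : σs.symm (σ j) ≤ q) (hjl : r < j) :
    {m : Fin n | l ≤ m ∧ m ≤ r ∧ q < σs.symm (σ m)}.ncard ≤ cost A σ T + cost A σs T := by
  classical
  set S1 : Set (Fin n) := {m | l ≤ m ∧ m ≤ r ∧ A (σ j) (σ m)} with hS1
  set S2 : Set (Fin n) := {m | l ≤ m ∧ m ≤ r ∧ A (σ m) (σ j) ∧ q < σs.symm (σ m)} with hS2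
  have hsub : {m : Fin n | l ≤ m ∧ m ≤ r ∧ q < σs.symm (σ m)} ⊆ S1 ∪ S2 := by
    intro m hm
    obtain ⟨h1, h2, h3⟩ := hm
    have hne : σ m ≠ σ j := by
      intro h
      exact absurd (σ.injective h) (by intro h'; subst h'; exact absurd h2 (not_le.mpr hjl))
    by_cases hc : A (σ j) (σ m)
    · exact Or.inl ⟨h1, h2, hc⟩
    · exact Or.inr ⟨h1, h2, (hA.2 (σ m) (σ j) hne).mpr hc, h3⟩
  have hb1 : S1.ncard ≤ cost A σ T := by
    apply count_le (fun m => (j, m))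
    · rintro m ⟨h1, h2, h3⟩
      obtain ⟨w, hw1, hw2, hw3⟩ := hterm
      exact ⟨⟨lt_of_le_of_lt h2 hjl, h3⟩, w, le_trans h2 hw1.le, hw2, hw3⟩
    · intro a _ b _ h; exact congrArg Prod.snd h
  have hb2 : S2.ncard ≤ cost A σs T := by
    apply count_le (fun m => (σs.symm (σ m), σs.symm (σ j)))
    · rintro m ⟨h1, h2, h3, h4⟩
      refine ⟨⟨lt_of_le_of_lt hjq h4, ?_⟩, q, hjq, h4.le, hq⟩
      simpa using h3
    · intro a _ b _ h
      have := congrArg Prod.fst h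
      simp only at this
      exact σ.injective (σs.symm.injective this)
  calc _ ≤ (S1 ∪ S2).ncard := Set.ncard_le_ncard hsub (Set.toFinite _)
    _ ≤ S1.ncard + S2.ncard := Set.ncard_union_le S1 S2
    _ ≤ _ := Nat.add_le_add hb1 hb2

lemma LOR {n : ℕ} {A : Fin n → Fin n → Prop} (hirr : ∀ v, ¬ A v v) {T : Set (Fin n)}
    {σ σs : Equiv.Perm (Fin n)} {l r i q : Fin n}
    (hnt : NonTerm σ T l r)
    (hq : σs q ∈ T) (hi : l ≤ i) (hir : i ≤ r) (hpi : q < σs.symm (σ i)) :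
    outIn A σ l r i + 1 ≤
      {m : Fin n | l ≤ m ∧ m ≤ r ∧ q < σs.symm (σ m)}.ncard + cost A σs T := by
  classical
  set N : Set (Fin n) := {m | l ≤ m ∧ m ≤ r ∧ A (σ i) (σ m)} with hN
  set N1 : Set (Fin n) := {m ∈ N | q < σs.symm (σ m)} with hN1
  set N2 : Set (Fin n) := {m ∈ N | ¬ q < σs.symm (σ m)} with hN2
  have hb2 : N2.ncard ≤ cost A σs T := by
    apply count_le (fun m => (σs.symm (σ i), σs.symm (σ m)))
    · rintro m ⟨⟨h1, h2, h3⟩, h4⟩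
      have hmq : σs.symm (σ m) < q := by
        rcases lt_or_ge (σs.symm (σ m)) q with h | h
        · exact h
        · exfalso
          rcases lt_or_eq_of_le h with h' | h'
          · exact h4 h'
          · apply hnt m h1 h2
            have : σs q = σ m := by rw [h']; simp
            rwa [this] at hq
      refine ⟨⟨lt_trans hmq hpi, ?_⟩, q, hmq.le, hpi.le, hq⟩
      simpa using h3
    · intro a _ b _ h
      have := congrArg Prod.snd h
      simp only at this
      exact σ.injective (σs.symm.injective this)
  have hiN1 : i ∉ N1 := by
    rintro ⟨⟨_, _, h3⟩, _⟩; exact hirr _ h3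
  have hins : insert i N1 ⊆ {m : Fin n | l ≤ m ∧ m ≤ r ∧ q < σs.symm (σ m)} := by
    rintro m (rfl | ⟨⟨h1, h2, _⟩, h4⟩)
    · exact ⟨hi, hir, hpi⟩
    · exact ⟨h1, h2, h4⟩
  have h1 : N1.ncard + 1 ≤ {m : Fin n | l ≤ m ∧ m ≤ r ∧ q < σs.symm (σ m)}.ncard := by
    rw [← Set.ncard_insert_of_notMem hiN1]
    exact Set.ncard_le_ncard hins (Set.toFinite _)
  have hNsplit : N ⊆ N1 ∪ N2 := by
    intro m hm; by_cases hc : q < σs.symm (σ m)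
    · exact Or.inl ⟨hm, hc⟩
    · exact Or.inr ⟨hm, hc⟩
  have hNcard : outIn A σ l r i ≤ N1.ncard + N2.ncard := by
    calc outIn A σ l r i = N.ncard := rfl
      _ ≤ (N1 ∪ N2).ncard := Set.ncard_le_ncard hNsplit (Set.toFinite _)
      _ ≤ _ := Set.ncard_union_le N1 N2
  omega

-- out + in = r - l for a tournament, i in [l,r]
lemma out_in_sum {n : ℕ} {A : Fin n → Fin n → Prop} (hA : IsTournament A)
    (σ : Equiv.Perm (Fin n)) {l r i : Fin n} (hi : l ≤ i) (hir : i ≤ r) :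
    outIn A σ l r i + inIn A σ l r i = (r : ℕ) - (l : ℕ) := by
  classical
  have hIcard : {m : Fin n | l ≤ m ∧ m ≤ r}.ncard = (r : ℕ) + 1 - (l : ℕ) := by
    have : {m : Fin n | l ≤ m ∧ m ≤ r} = ↑(Finset.Icc l r) := by
      ext m; simp [Finset.mem_Icc]
    rw [this, Set.ncard_coe_finset, Fin.card_Icc]
  have hdisj : Disjoint {m : Fin n | l ≤ m ∧ m ≤ r ∧ A (σ i) (σ m)}
      {m : Fin n | l ≤ m ∧ m ≤ r ∧ A (σ m) (σ i)} := by
    rw [Set.disjoint_left]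
    rintro m ⟨_, _, h1⟩ ⟨_, _, h2⟩
    have hne : σ i ≠ σ m := by
      intro h; rw [h] at h1; exact hA.1 _ h1
    exact ((hA.2 (σ i) (σ m) hne).mp h1) h2
  have hunion : {m : Fin n | l ≤ m ∧ m ≤ r ∧ A (σ i) (σ m)} ∪
      {m : Fin n | l ≤ m ∧ m ≤ r ∧ A (σ m) (σ i)} = {m : Fin n | l ≤ m ∧ m ≤ r} \ {i} := by
    ext m
    constructor
    · rintro (⟨h1, h2, h3⟩ | ⟨h1, h2, h3⟩)
      · refine ⟨⟨h1, h2⟩, ?_⟩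
        intro h; rw [Set.mem_singleton_iff] at h; subst h; exact hA.1 _ h3
      · refine ⟨⟨h1, h2⟩, ?_⟩
        intro h; rw [Set.mem_singleton_iff] at h; subst h; exact hA.1 _ h3
    · rintro ⟨⟨h1, h2⟩, h3⟩
      have hne : σ i ≠ σ m := by
        intro h
        exact h3 (Set.mem_singleton_iff.mpr (σ.injective h).symm)
      by_cases hc : A (σ i) (σ m)
      · exact Or.inl ⟨h1, h2, hc⟩
      · exact Or.inr ⟨h1, h2, (hA.2 (σ m) (σ i) hne.symm).mpr hc⟩
  have hmemi : i ∈ {m : Fin n | l ≤ m ∧ m ≤ r} := ⟨hi, hir⟩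
  have hdiff : ({m : Fin n | l ≤ m ∧ m ≤ r} \ {i}).ncard =
      {m : Fin n | l ≤ m ∧ m ≤ r}.ncard - 1 := Set.ncard_diff_singleton_of_mem hmemi
  have := Set.ncard_union_eq hdisj (Set.toFinite _) (Set.toFinite _)
  rw [hunion, hdiff, hIcard] at this
  have hlr : (l : ℕ) ≤ (r : ℕ) := le_trans hi hir
  unfold outIn inIn
  omega

/-- Upper bound on the number of `I`-positions mapped (by `σs⁻¹∘σ`) strictly left of a
terminal position `q` of `σs`, given a vertex `σ j` left of `I` in `σ` whose `σs`-position
is at least `q`. -/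
lemma UL {n : ℕ} {A : Fin n → Fin n → Prop} (hA : IsTournament A) {T : Set (Fin n)}
    {σ σs : Equiv.Perm (Fin n)} {l r j q : Fin n}
    (hterm : ∃ w, j ≤ w ∧ w < l ∧ σ w ∈ T)
    (hq : σs q ∈ T) (hjq : q ≤ σs.symm (σ j)) (hjl : j < l) :
    {m : Fin n | l ≤ m ∧ m ≤ r ∧ σs.symm (σ m) < q}.ncard ≤ cost A σ T + cost A σs T := by
  classical
  set S1 : Set (Fin n) := {m | l ≤ m ∧ m ≤ r ∧ A (σ m) (σ j)} with hS1
  set S2 : Set (Fin n) := {m | l ≤ m ∧ m ≤ r ∧ A (σ j) (σ m) ∧ σs.symm (σ m) < q} with hS2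
  have hsub : {m : Fin n | l ≤ m ∧ m ≤ r ∧ σs.symm (σ m) < q} ⊆ S1 ∪ S2 := by
    intro m hm
    obtain ⟨h1, h2, h3⟩ := hm
    have hne : σ m ≠ σ j := by
      intro h
      exact absurd (σ.injective h) (by intro h'; subst h'; exact absurd h1 (not_le.mpr hjl))
    by_cases hc : A (σ m) (σ j)
    · exact Or.inl ⟨h1, h2, hc⟩
    · exact Or.inr ⟨h1, h2, (hA.2 (σ j) (σ m) hne.symm).mpr hc, h3⟩
  have hb1 : S1.ncard ≤ cost A σ T := by
    apply count_le (fun m => (m, j))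
    · rintro m ⟨h1, h2, h3⟩
      obtain ⟨w, hw1, hw2, hw3⟩ := hterm
      exact ⟨⟨lt_of_lt_of_le hjl h1, h3⟩, w, hw1, le_trans hw2.le h1, hw3⟩
    · intro a _ b _ h; exact congrArg Prod.fst h
  have hb2 : S2.ncard ≤ cost A σs T := by
    apply count_le (fun m => (σs.symm (σ j), σs.symm (σ m)))
    · rintro m ⟨h1, h2, h3, h4⟩
      refine ⟨⟨lt_of_lt_of_le h4 hjq, ?_⟩, q, h4.le, hjq, hq⟩
      simpa using h3
    · intro a _ b _ h
      have := congrArg Prod.snd h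
      simp only at this
      exact σ.injective (σs.symm.injective this)
  calc _ ≤ (S1 ∪ S2).ncard := Set.ncard_le_ncard hsub (Set.toFinite _)
    _ ≤ S1.ncard + S2.ncard := Set.ncard_union_le S1 S2
    _ ≤ _ := Nat.add_le_add hb1 hb2

/-- Lower bound: a vertex `i` of `I` sitting left of terminal position `q` of `σs`
forces many `I`-positions left of `q`. -/
lemma LOL {n : ℕ} {A : Fin n → Fin n → Prop} (hirr : ∀ v, ¬ A v v) {T : Set (Fin n)}
    {σ σs : Equiv.Perm (Fin n)} {l r i q : Fin n}
    (hnt : NonTerm σ T l r)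
    (hq : σs q ∈ T) (hi : l ≤ i) (hir : i ≤ r) (hpi : σs.symm (σ i) < q) :
    inIn A σ l r i + 1 ≤
      {m : Fin n | l ≤ m ∧ m ≤ r ∧ σs.symm (σ m) < q}.ncard + cost A σs T := by
  classical
  set N : Set (Fin n) := {m | l ≤ m ∧ m ≤ r ∧ A (σ m) (σ i)} with hN
  set N1 : Set (Fin n) := {m ∈ N | σs.symm (σ m) < q} with hN1
  set N2 : Set (Fin n) := {m ∈ N | ¬ σs.symm (σ m) < q} with hN2
  have hb2 : N2.ncard ≤ cost A σs T := by
    apply count_le (fun m => (σs.symm (σ m), σs.symm (σ i)))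
    · rintro m ⟨⟨h1, h2, h3⟩, h4⟩
      have hmq : q < σs.symm (σ m) := by
        rcases lt_or_ge q (σs.symm (σ m)) with h | h
        · exact h
        · exfalso
          rcases lt_or_eq_of_le h with h' | h'
          · exact h4 h'
          · apply hnt m h1 h2
            have : σs q = σ m := by rw [← h']; simp
            rwa [this] at hq
      refine ⟨⟨lt_trans hpi hmq, ?_⟩, q, hpi.le, hmq.le, hq⟩
      simpa using h3
    · intro a _ b _ h
      have := congrArg Prod.fst h
      simp only at this
      exact σ.injective (σs.symm.injective this)
  have hiN1 : i ∉ N1 := by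
    rintro ⟨⟨_, _, h3⟩, _⟩; exact hirr _ h3
  have hins : insert i N1 ⊆ {m : Fin n | l ≤ m ∧ m ≤ r ∧ σs.symm (σ m) < q} := by
    rintro m (rfl | ⟨⟨h1, h2, _⟩, h4⟩)
    · exact ⟨hi, hir, hpi⟩
    · exact ⟨h1, h2, h4⟩
  have h1 : N1.ncard + 1 ≤ {m : Fin n | l ≤ m ∧ m ≤ r ∧ σs.symm (σ m) < q}.ncard := by
    rw [← Set.ncard_insert_of_notMem hiN1]
    exact Set.ncard_le_ncard hins (Set.toFinite _)
  have hNsplit : N ⊆ N1 ∪ N2 := by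
    intro m hm; by_cases hc : σs.symm (σ m) < q
    · exact Or.inl ⟨hm, hc⟩
    · exact Or.inr ⟨hm, hc⟩
  have hNcard : inIn A σ l r i ≤ N1.ncard + N2.ncard := by
    calc inIn A σ l r i = N.ncard := rfl
      _ ≤ (N1 ∪ N2).ncard := Set.ncard_le_ncard hNsplit (Set.toFinite _)
      _ ≤ _ := Set.ncard_union_le N1 N2
  omega

/-- with `d = (β+2)k + 1`, if `σ` has cost at most `βk`, the maximal
non-terminal interval `I = [l, r]` of `σ` has length at least `2d + 1` and contains at
least `k + 1` rich vertices, and the instance is a YES-instance, then for any optimal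
order `σ*` there is a maximal non-terminal interval `I* = [l*, r*]` of `σ*` such that:
(a) terminals of `I_L` (resp. `I_R`) lie in `I*_L` (resp. `I*_R`); (b) all rich vertices
of `I` lie in `I*`; (c) no out-rich (resp. in-rich) vertex of `I` lies in `I*_R`
(resp. `I*_L`); (d) no vertex of `I_L` (resp. `I_R`) lies in `I*_R` (resp. `I*_L`). -/
theorem stmt11 {n : ℕ} (A : Fin n → Fin n → Prop) (hA : IsTournament A)
    (T : Set (Fin n)) (β k : ℕ) (σ σs : Equiv.Perm (Fin n))
    (hcost : cost A σ T ≤ β * k)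
    (hyes : ∃ τ : Equiv.Perm (Fin n), cost A τ T ≤ k)
    (hopt : ∀ τ : Equiv.Perm (Fin n), cost A σs T ≤ cost A τ T)
    (l r : Fin n) (hmax : MaxNonTerm σ T l r)
    (hlen : 2 * ((β + 2) * k + 1) + 1 ≤ (r : ℕ) - (l : ℕ) + 1)
    (hrich : k + 1 ≤
      {i : Fin n | l ≤ i ∧ i ≤ r ∧ RichAt A σ ((β + 2) * k + 1) l r i}.ncard) :
    ∃ ls rs : Fin n, MaxNonTerm σs T ls rs ∧
      -- (a)
      (∀ j : Fin n, j < l → σ j ∈ T → σs.symm (σ j) < ls) ∧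
      (∀ j : Fin n, r < j → σ j ∈ T → rs < σs.symm (σ j)) ∧
      -- (b)
      (∀ i : Fin n, l ≤ i → i ≤ r → RichAt A σ ((β + 2) * k + 1) l r i →
        ls ≤ σs.symm (σ i) ∧ σs.symm (σ i) ≤ rs) ∧
      -- (c)
      (∀ i : Fin n, l ≤ i → i ≤ r → OutRichAt A σ ((β + 2) * k + 1) l r i →
        ¬ rs < σs.symm (σ i)) ∧
      (∀ i : Fin n, l ≤ i → i ≤ r → InRichAt A σ ((β + 2) * k + 1) l r i →
        ¬ σs.symm (σ i) < ls) ∧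
      -- (d)
      (∀ j : Fin n, j < l → ¬ rs < σs.symm (σ j)) ∧
      (∀ j : Fin n, r < j → ¬ σs.symm (σ j) < ls) := by
  classical
  obtain ⟨τ, hτ⟩ := hyes
  have hk : cost A σs T ≤ k := le_trans (hopt τ) hτ
  have hirr := hA.1
  have hnt := hmax.2.1
  have hlr := hmax.1
  have e : (β + 2) * k = β * k + 2 * k := by ring
  -- a rich vertex i₀
  have hne : {i : Fin n | l ≤ i ∧ i ≤ r ∧ RichAt A σ ((β + 2) * k + 1) l r i}.Nonempty := by
    rcases Set.eq_empty_or_nonempty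
      {i : Fin n | l ≤ i ∧ i ≤ r ∧ RichAt A σ ((β + 2) * k + 1) l r i} with h | h
    · rw [h, Set.ncard_empty] at hrich; omega
    · exact h
  obtain ⟨i₀, hi₀l, hi₀r, hi₀rich⟩ := hne
  set p₀ : Fin n := σs.symm (σ i₀) with hp₀def
  have hp₀T : σs p₀ ∉ T := by
    rw [hp₀def, Equiv.apply_symm_apply]; exact hnt i₀ hi₀l hi₀r
  -- terminals adjacent to I in σ
  have hexL : ∀ j : Fin n, j < l → ∃ w, j ≤ w ∧ w < l ∧ σ w ∈ T := by
    intro j hjl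
    have h1 : ¬ NonTerm σ T j r := by
      intro h
      exact absurd (hmax.2.2 j r hjl.le le_rfl h).1 (ne_of_lt hjl)
    unfold NonTerm at h1; push_neg at h1
    obtain ⟨w, hw1, hw2, hw3⟩ := h1
    refine ⟨w, hw1, ?_, hw3⟩
    by_contra hc
    exact hnt w (not_lt.mp hc) hw2 hw3
  have hexR : ∀ j : Fin n, r < j → ∃ w, r < w ∧ w ≤ j ∧ σ w ∈ T := by
    intro j hjr
    have h1 : ¬ NonTerm σ T l j := by
      intro h
      exact absurd (hmax.2.2 l j le_rfl hjr.le h).2 (ne_of_gt hjr)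
    unfold NonTerm at h1; push_neg at h1
    obtain ⟨w, hw1, hw2, hw3⟩ := h1
    refine ⟨w, ?_, hw2, hw3⟩
    by_contra hc
    exact hnt w hw1 (not_lt.mp hc) hw3
  -- construct the maximal non-terminal interval of σs around p₀
  obtain ⟨ls, hlsmem, hlsmin⟩ := Set.exists_min_image
    {a : Fin n | a ≤ p₀ ∧ NonTerm σs T a p₀} id (Set.toFinite _)
    ⟨p₀, le_rfl, fun m h1 h2 => by
      have hm : m = p₀ := le_antisymm h2 h1
      rw [hm]; exact hp₀T⟩
  obtain ⟨rs, hrsmem, hrsmax⟩ := Set.exists_max_image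
    {b : Fin n | p₀ ≤ b ∧ NonTerm σs T p₀ b} id (Set.toFinite _)
    ⟨p₀, le_rfl, fun m h1 h2 => by
      have hm : m = p₀ := le_antisymm h2 h1
      rw [hm]; exact hp₀T⟩
  obtain ⟨hlsp, hlsnt⟩ := hlsmem
  obtain ⟨hrsp, hrsnt⟩ := hrsmem
  have hlsrs : ls ≤ rs := hlsp.trans hrsp
  have hMnt : NonTerm σs T ls rs := by
    intro m h1 h2
    rcases le_total m p₀ with h | h
    · exact hlsnt m h1 h
    · exact hrsnt m h h2
  have hM : MaxNonTerm σs T ls rs := by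
    refine ⟨hlsrs, hMnt, ?_⟩
    intro l' r' h1 h2 h3
    constructor
    · refine le_antisymm h1 (hlsmin l' ⟨h1.trans hlsp, ?_⟩)
      intro m hm1 hm2
      exact h3 m hm1 (hm2.trans (hrsp.trans h2))
    · refine le_antisymm (hrsmax r' ⟨hrsp.trans h2, ?_⟩) h2
      intro m hm1 hm2
      exact h3 m ((h1.trans hlsp).trans hm1) hm2
  -- boundary terminals of I* in σs
  have hbdryR : ∀ x : Fin n, rs < x → ∃ q : Fin n, (q : ℕ) = (rs : ℕ) + 1 ∧ σs q ∈ T := by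
    intro x hx
    have hx' : (rs : ℕ) < (x : ℕ) := hx
    have hq : (rs : ℕ) + 1 < n := lt_of_le_of_lt hx' x.isLt
    refine ⟨⟨(rs : ℕ) + 1, hq⟩, rfl, ?_⟩
    by_contra hqT
    have hmem : (⟨(rs : ℕ) + 1, hq⟩ : Fin n) ∈ {b : Fin n | p₀ ≤ b ∧ NonTerm σs T p₀ b} := by
      refine ⟨?_, ?_⟩
      · have : (p₀ : ℕ) ≤ (rs : ℕ) := hrsp
        exact Fin.le_def.mpr (by simp; omega)
      · intro m hm1 hm2
        have hm2' : (m : ℕ) ≤ (rs : ℕ) + 1 := hm2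
        rcases Nat.lt_or_ge (m : ℕ) ((rs : ℕ) + 1) with h | h
        · exact hrsnt m hm1 (Fin.le_def.mpr (by omega))
        · have : m = (⟨(rs : ℕ) + 1, hq⟩ : Fin n) := Fin.ext (by simp; omega)
          rw [this]; exact hqT
    have := hrsmax _ hmem
    simp only [id] at this
    have : ((⟨(rs : ℕ) + 1, hq⟩ : Fin n) : ℕ) ≤ (rs : ℕ) := this
    simp at this
  have hbdryL : ∀ x : Fin n, x < ls → ∃ q : Fin n, (q : ℕ) + 1 = (ls : ℕ) ∧ σs q ∈ T := by
    intro x hx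
    have hx' : (x : ℕ) < (ls : ℕ) := hx
    have hq : (ls : ℕ) - 1 < n := lt_of_le_of_lt (Nat.sub_le _ _) ls.isLt
    refine ⟨⟨(ls : ℕ) - 1, hq⟩, by simp; omega, ?_⟩
    by_contra hqT
    have hmem : (⟨(ls : ℕ) - 1, hq⟩ : Fin n) ∈ {a : Fin n | a ≤ p₀ ∧ NonTerm σs T a p₀} := by
      refine ⟨?_, ?_⟩
      · have : (ls : ℕ) ≤ (p₀ : ℕ) := hlsp
        exact Fin.le_def.mpr (by simp; omega)
      · intro m hm1 hm2
        have hm1' : (ls : ℕ) - 1 ≤ (m : ℕ) := hm1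
        rcases Nat.lt_or_ge (m : ℕ) (ls : ℕ) with h | h
        · have : m = (⟨(ls : ℕ) - 1, hq⟩ : Fin n) := Fin.ext (by simp; omega)
          rw [this]; exact hqT
        · exact hlsnt m (Fin.le_def.mpr h) hm2
    have := hlsmin _ hmem
    simp only [id] at this
    have : (ls : ℕ) ≤ ((⟨(ls : ℕ) - 1, hq⟩ : Fin n) : ℕ) := this
    simp at this
    omega
  -- master contradictions
  have hKeyL : ∀ q : Fin n, σs q ∈ T → p₀ < q →
      ∀ j : Fin n, j < l → q ≤ σs.symm (σ j) → False := by
    intro q hq hpq j hjl hqj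
    have h1 := UL (r := r) hA (hexL j hjl) hq hqj hjl
    have h2 := LOL hirr hnt hq hi₀l hi₀r hpq
    have h3 : (β + 2) * k + 1 ≤ inIn A σ l r i₀ := hi₀rich.2
    linarith
  have hKeyR : ∀ q : Fin n, σs q ∈ T → q < p₀ →
      ∀ j : Fin n, r < j → σs.symm (σ j) ≤ q → False := by
    intro q hq hpq j hjr hqj
    have h1 := UR (l := l) hA (hexR j hjr) hq hqj hjr
    have h2 := LOR hirr hnt hq hi₀l hi₀r hpq
    have h3 : (β + 2) * k + 1 ≤ outIn A σ l r i₀ := hi₀rich.1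
    linarith
  -- kill claims
  have hRK : ∀ i : Fin n, l ≤ i → i ≤ r → (β + 2) * k + 1 ≤ outIn A σ l r i →
      ¬ rs < σs.symm (σ i) := by
    intro i hil hir' hout hlt
    obtain ⟨q, hqv, hqT⟩ := hbdryR _ hlt
    have hpq : p₀ < q := Fin.lt_def.mpr (by
      have : (p₀ : ℕ) ≤ (rs : ℕ) := hrsp
      omega)
    have hqile : q ≤ σs.symm (σ i) := Fin.le_def.mpr (by
      have : (rs : ℕ) < ((σs.symm (σ i)) : ℕ) := hlt
      omega)
    have hqi : q < σs.symm (σ i) := by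
      rcases lt_or_eq_of_le hqile with h | h
      · exact h
      · exfalso
        apply hnt i hil hir'
        have : σs q = σ i := by rw [h, Equiv.apply_symm_apply]
        rwa [this] at hqT
    set j' : Fin n := σ.symm (σs q) with hj'def
    have hj's : σ j' = σs q := by rw [hj'def, Equiv.apply_symm_apply]
    have hj'nt : ¬ (l ≤ j' ∧ j' ≤ r) := by
      rintro ⟨a, b⟩
      exact hnt j' a b (hj's ▸ hqT)
    by_cases hc : j' < l
    · exact hKeyL q hqT hpq j' hc (by rw [hj's, Equiv.symm_apply_apply])
    · have hrj' : r < j' := by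
        rcases not_and_or.mp hj'nt with h | h
        · exact absurd (not_lt.mp hc) h
        · exact not_le.mp h
      have h1 := UR (l := l) hA (hexR j' hrj') hqT
        (show σs.symm (σ j') ≤ q by rw [hj's, Equiv.symm_apply_apply]) hrj'
      have h2 := LOR hirr hnt hqT hil hir' hqi
      linarith
  have hLK : ∀ i : Fin n, l ≤ i → i ≤ r → (β + 2) * k + 1 ≤ inIn A σ l r i →
      ¬ σs.symm (σ i) < ls := by
    intro i hil hir' hin hlt
    obtain ⟨q, hqv, hqT⟩ := hbdryL _ hlt
    have hpq : q < p₀ := Fin.lt_def.mpr (by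
      have : (ls : ℕ) ≤ (p₀ : ℕ) := hlsp
      omega)
    have hqile : σs.symm (σ i) ≤ q := Fin.le_def.mpr (by
      have : ((σs.symm (σ i)) : ℕ) < (ls : ℕ) := hlt
      omega)
    have hqi : σs.symm (σ i) < q := by
      rcases lt_or_eq_of_le hqile with h | h
      · exact h
      · exfalso
        apply hnt i hil hir'
        have : σs q = σ i := by rw [← h, Equiv.apply_symm_apply]
        rwa [this] at hqT
    set j' : Fin n := σ.symm (σs q) with hj'def
    have hj's : σ j' = σs q := by rw [hj'def, Equiv.apply_symm_apply]
    have hj'nt : ¬ (l ≤ j' ∧ j' ≤ r) := by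
      rintro ⟨a, b⟩
      exact hnt j' a b (hj's ▸ hqT)
    by_cases hc : r < j'
    · exact hKeyR q hqT hpq j' hc (by rw [hj's, Equiv.symm_apply_apply])
    · have hlj' : j' < l := by
        rcases not_and_or.mp hj'nt with h | h
        · exact not_le.mp h
        · exact absurd (not_lt.mp hc) h
      have h1 := UL (r := r) hA (hexL j' hlj') hqT
        (show q ≤ σs.symm (σ j') by rw [hj's, Equiv.symm_apply_apply]) hlj'
      have h2 := LOL hirr hnt hqT hil hir' hqi
      linarith
  -- (d1)
  have hd1 : ∀ j : Fin n, j < l → ¬ rs < σs.symm (σ j) := by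
    intro j hjl hlt
    obtain ⟨q, hqv, hqT⟩ := hbdryR _ hlt
    have hpq : p₀ < q := Fin.lt_def.mpr (by
      have : (p₀ : ℕ) ≤ (rs : ℕ) := hrsp
      omega)
    exact hKeyL q hqT hpq j hjl (Fin.le_def.mpr (by
      have : (rs : ℕ) < ((σs.symm (σ j)) : ℕ) := hlt
      omega))
  -- (d2)
  have hd2 : ∀ j : Fin n, r < j → ¬ σs.symm (σ j) < ls := by
    intro j hjr hlt
    obtain ⟨q, hqv, hqT⟩ := hbdryL _ hlt
    have hpq : q < p₀ := Fin.lt_def.mpr (by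
      have : (ls : ℕ) ≤ (p₀ : ℕ) := hlsp
      omega)
    exact hKeyR q hqT hpq j hjr (Fin.le_def.mpr (by
      have : ((σs.symm (σ j)) : ℕ) < (ls : ℕ) := hlt
      omega))
  -- (a1)
  have ha1 : ∀ j : Fin n, j < l → σ j ∈ T → σs.symm (σ j) < ls := by
    intro j hjl hjT
    by_contra hc
    have h1 : ls ≤ σs.symm (σ j) := not_lt.mp hc
    have h2 : σs.symm (σ j) ≤ rs := not_lt.mp (hd1 j hjl)
    exact hMnt _ h1 h2 (by rwa [Equiv.apply_symm_apply])
  -- (a2)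
  have ha2 : ∀ j : Fin n, r < j → σ j ∈ T → rs < σs.symm (σ j) := by
    intro j hjr hjT
    by_contra hc
    have h1 : σs.symm (σ j) ≤ rs := not_lt.mp hc
    have h2 : ls ≤ σs.symm (σ j) := not_lt.mp (hd2 j hjr)
    exact hMnt _ h2 h1 (by rwa [Equiv.apply_symm_apply])
  refine ⟨ls, rs, hM, ha1, ha2, ?_, ?_, ?_, hd1, hd2⟩
  · -- (b)
    intro i hil hir' hrich'
    constructor
    · exact not_lt.mp (hLK i hil hir' hrich'.2)
    · exact not_lt.mp (hRK i hil hir' hrich'.1)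
  · -- (c1)
    intro i hil hir' hor
    apply hRK i hil hir'
    have hsum := out_in_sum hA σ hil hir'
    have hin : inIn A σ l r i ≤ (β + 2) * k := by
      unfold OutRichAt at hor
      have h1 : (β + 2) * k + 1 - 1 = (β + 2) * k := by simp
      linarith [hor, h1.le, h1.ge]
    linarith
  · -- (c2)
    intro i hil hir' hor
    apply hLK i hil hir'
    have hsum := out_in_sum hA σ hil hir'
    have hout : outIn A σ l r i ≤ (β + 2) * k := by
      unfold InRichAt at hor
      have h1 : (β + 2) * k + 1 - 1 = (β + 2) * k := by simp
      linarith [hor, h1.le, h1.ge]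
    linarith
end

section
/- If every maximal non-terminal interval of the reduced instance (to which the rich-vertex replacement rule cannot be applied) has length at most λ = (7β+13)k + 5, then any reduced instance with more than 6β(3β+5)k² + (21β+13)k + 5 vertices is a NO-instance. -/
open Finset in
/-- Dichotomy: for any terminal `m` between the extreme terminals `t₀ ≤ t₁` of the span
of an affected arc `(b, a)`, either the unaffected positions in `(t₀, m)` or those in
`(m, t₁)` number at most `k`. -/
theorem sfast_dichotomy {n : ℕ} {A : Fin n → Fin n → Prop} (hA : IsTournament A)
    {T : Set (Fin n)} {σ : Equiv.Perm (Fin n)} {k : ℕ} (hred : ¬ RuleKC A σ T k)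
    (W : Finset (Fin n))
    (hWmem : ∀ (x : Fin n) (pp : Fin n × Fin n), AffectedPair A σ T pp →
      (pp.1 = x ∨ pp.2 = x) → x ∈ W)
    {a b t₀ t₁ m : Fin n}
    (hba : a < b) (harc : A (σ b) (σ a))
    (ht₀T : σ t₀ ∈ T) (ht₁T : σ t₁ ∈ T) (hmT : σ m ∈ T)
    (hat₀ : a ≤ t₀) (ht₀m : t₀ ≤ m) (hmt₁ : m ≤ t₁) (ht₁b : t₁ ≤ b) :
    ((Finset.Ioo t₀ m).filter (· ∉ W)).card ≤ k ∨
    ((Finset.Ioo m t₁).filter (· ∉ W)).card ≤ k := by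
  by_contra hcon
  push_neg at hcon
  obtain ⟨hL, hR⟩ := hcon
  obtain ⟨L, hLsub, hLcard⟩ := Finset.exists_subset_card_eq hL
  obtain ⟨R, hRsub, hRcard⟩ := Finset.exists_subset_card_eq hR
  set u : Fin (k+1) → Fin n := fun i => ((L.orderIsoOfFin hLcard) i : Fin n) with hu
  set v : Fin (k+1) → Fin n := fun i => ((R.orderIsoOfFin hRcard) i : Fin n) with hv
  have huinj : Function.Injective u := fun i j h => by
    exact (L.orderIsoOfFin hLcard).injective (Subtype.ext h)
  have hvinj : Function.Injective v := fun i j h => by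
    exact (R.orderIsoOfFin hRcard).injective (Subtype.ext h)
  have huL : ∀ i, u i ∈ Finset.Ioo t₀ m ∧ u i ∉ W := by
    intro i
    have : u i ∈ L := ((L.orderIsoOfFin hLcard) i).2
    have := hLsub this
    simpa using this
  have hvR : ∀ i, v i ∈ Finset.Ioo m t₁ ∧ v i ∉ W := by
    intro i
    have : v i ∈ R := ((R.orderIsoOfFin hRcard) i).2
    have := hRsub this
    simpa using this
  -- tournament arc direction helper
  have tour : ∀ x y : Fin n, x ≠ y → ¬ A (σ y) (σ x) → A (σ x) (σ y) := by
    intro x y hxy hnyx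
    have hne : σ x ≠ σ y := fun h => hxy (σ.injective h)
    exact (hA.2 (σ x) (σ y) hne).mpr hnyx
  -- structural facts about u i and v i
  have hu1 : ∀ i, (t₀ : ℕ) < (u i : ℕ) ∧ (u i : ℕ) < (m : ℕ) := by
    intro i; have := (huL i).1; rw [Finset.mem_Ioo] at this
    exact ⟨this.1, this.2⟩
  have hv1 : ∀ i, (m : ℕ) < (v i : ℕ) ∧ (v i : ℕ) < (t₁ : ℕ) := by
    intro i; have := (hvR i).1; rw [Finset.mem_Ioo] at this
    exact ⟨this.1, this.2⟩
  have hat₀' : (a : ℕ) ≤ (t₀ : ℕ) := hat₀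
  have ht₁b' : (t₁ : ℕ) ≤ (b : ℕ) := ht₁b
  -- the four arc facts
  have arc_au : ∀ i, A (σ a) (σ (u i)) := by
    intro i
    have hlt : (a : ℕ) < (u i : ℕ) := lt_of_le_of_lt hat₀' (hu1 i).1
    refine tour a (u i) (fun h => by simp [h] at hlt) (fun hcon => ?_)
    have : AffectedPair A σ T (u i, a) :=
      ⟨⟨hlt, hcon⟩, t₀, hat₀, le_of_lt (hu1 i).1, ht₀T⟩
    exact (huL i).2 (hWmem (u i) _ this (Or.inl rfl))
  have arc_um : ∀ i, A (σ (u i)) (σ m) := by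
    intro i
    have hlt : (u i : ℕ) < (m : ℕ) := (hu1 i).2
    refine tour (u i) m (fun h => by simp [h] at hlt) (fun hcon => ?_)
    have : AffectedPair A σ T (m, u i) :=
      ⟨⟨hlt, hcon⟩, m, le_of_lt hlt, le_refl m, hmT⟩
    exact (huL i).2 (hWmem (u i) _ this (Or.inr rfl))
  have arc_mv : ∀ i, A (σ m) (σ (v i)) := by
    intro i
    have hlt : (m : ℕ) < (v i : ℕ) := (hv1 i).1
    refine tour m (v i) (fun h => by simp [h] at hlt) (fun hcon => ?_)
    have : AffectedPair A σ T (v i, m) :=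
      ⟨⟨hlt, hcon⟩, m, le_refl m, le_of_lt hlt, hmT⟩
    exact (hvR i).2 (hWmem (v i) _ this (Or.inl rfl))
  have arc_vb : ∀ i, A (σ (v i)) (σ b) := by
    intro i
    have hlt : (v i : ℕ) < (b : ℕ) := lt_of_lt_of_le (hv1 i).2 ht₁b'
    refine tour (v i) b (fun h => by simp [h] at hlt) (fun hcon => ?_)
    have : AffectedPair A σ T (b, v i) :=
      ⟨⟨hlt, hcon⟩, t₁, le_of_lt (hv1 i).2, ht₁b, ht₁T⟩
    exact (hvR i).2 (hWmem (v i) _ this (Or.inr rfl))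
  -- the paths
  set P : Fin (k+1) → List (Fin n) := fun i => [a, u i, m, v i, b] with hP
  apply hred
  refine ⟨a, b, hba, harc, m, le_trans hat₀ ht₀m, le_trans hmt₁ ht₁b, hmT, P, ?_, ?_⟩
  · intro i
    constructor
    · refine ⟨by simp [hP], by simp [hP], by simp [hP], ?_⟩
      have h1 : a < u i := by rw [Fin.lt_def]; exact lt_of_le_of_lt hat₀' (hu1 i).1
      have h2 : u i < m := by rw [Fin.lt_def]; exact (hu1 i).2
      have h3 : m < v i := by rw [Fin.lt_def]; exact (hv1 i).1
      have h4 : v i < b := by rw [Fin.lt_def]; exact lt_of_lt_of_le (hv1 i).2 ht₁b'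
      simp only [hP, List.isChain_cons_cons, List.isChain_singleton, and_true]
      exact .cons_cons ⟨h1, arc_au i⟩ (.cons_cons ⟨h2, arc_um i⟩ (.cons_cons ⟨h3, arc_mv i⟩ (.cons_cons ⟨h4, arc_vb i⟩ (.singleton _))))
    · simp [hP]
  · intro i j hij e hei hej
    have hij' : (u i : ℕ) ≠ (u j : ℕ) := fun h => hij (huinj (Fin.ext h))
    have hij'' : (v i : ℕ) ≠ (v j : ℕ) := fun h => hij (hvinj (Fin.ext h))
    have hbi := hu1 i; have hbj := hu1 j; have hci := hv1 i; have hcj := hv1 j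
    obtain ⟨e1, e2⟩ := e
    simp only [hP, parcs, List.zip, List.tail, List.zipWith, List.mem_cons,
      List.not_mem_nil, or_false, Prod.mk.injEq, Fin.ext_iff] at hei hej
    omega

/-- if the instance is reduced (every terminal lies in the span of an
affected arc, and the terminal-location property of reducedness holds) and every
non-terminal interval of a regular order of cost at most `βk` has length at most
`(7β+13)k + 5`, then an instance with more than `6β(3β+5)k² + (21β+13)k + 5` vertices
is a NO-instance. -/
theorem stmt12 {n : ℕ} (A : Fin n → Fin n → Prop) (hA : IsTournament A)
    (T : Set (Fin n)) (σ : Equiv.Perm (Fin n)) (β k : ℕ)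
    (hreg : Regular A σ T) (hcost : cost A σ T ≤ β * k)
    (hterm : ∀ t : Fin n, σ t ∈ T →
      ∃ p : Fin n × Fin n, AffectedPair A σ T p ∧ p.2 ≤ t ∧ t ≤ p.1)
    (hred : ¬ RuleKC A σ T k)
    (hint : ∀ l r : Fin n, l ≤ r → NonTerm σ T l r →
      (r : ℕ) - (l : ℕ) + 1 ≤ (7 * β + 13) * k + 5)
    (hbig : 6 * β * (3 * β + 5) * k ^ 2 + (21 * β + 13) * k + 5 < n) :
    ¬ ∃ τ : Equiv.Perm (Fin n), cost A τ T ≤ k := by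
  intro _hexists
  classical
  have hn : 5 < n := lt_of_le_of_lt (Nat.le_add_left _ _) hbig
  haveI : NeZero n := ⟨by omega⟩
  obtain ⟨K, hK⟩ : ∃ K, K = β * k := ⟨_, rfl⟩
  obtain ⟨Λ, hΛ⟩ : ∃ L, L = (7 * β + 13) * k + 5 := ⟨_, rfl⟩
  have hΛ5 : 5 ≤ Λ := hΛ ▸ Nat.le_add_left 5 _
  simp only [← hΛ] at hint
  rw [← hK] at hcost
  -- the affected pairs as a finset
  have hFfin : {p : Fin n × Fin n | AffectedPair A σ T p}.Finite := Set.toFinite _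
  set Fp : Finset (Fin n × Fin n) := hFfin.toFinset with hFpdef
  have hmemFp : ∀ p, p ∈ Fp ↔ AffectedPair A σ T p := fun p => Set.Finite.mem_toFinset _
  have hFcard : Fp.card ≤ K := by
    rw [hFpdef, ← Set.ncard_eq_toFinset_card]; exact hcost
  -- endpoints of affected pairs
  set W : Finset (Fin n) := Fp.image Prod.fst ∪ Fp.image Prod.snd with hWdef
  have hWmem : ∀ (x : Fin n) (pp : Fin n × Fin n), AffectedPair A σ T pp →
      (pp.1 = x ∨ pp.2 = x) → x ∈ W := by
    intro x pp hpp h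
    rw [hWdef]
    rcases h with h | h
    · exact Finset.mem_union_left _ (Finset.mem_image.mpr ⟨pp, (hmemFp pp).mpr hpp, h⟩)
    · exact Finset.mem_union_right _ (Finset.mem_image.mpr ⟨pp, (hmemFp pp).mpr hpp, h⟩)
  have hWcard : W.card ≤ K + K :=
    le_trans (Finset.card_union_le _ _)
      (add_le_add (le_trans Finset.card_image_le hFcard)
        (le_trans Finset.card_image_le hFcard))
  -- terminals inside each span
  set Tp : Fin n × Fin n → Finset (Fin n) :=
    fun p => (Finset.Icc p.2 p.1).filter (fun t => σ t ∈ T) with hTpdef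
  have hmemTp : ∀ p (t : Fin n), t ∈ Tp p ↔ (p.2 ≤ t ∧ t ≤ p.1) ∧ σ t ∈ T := by
    intro p t; rw [hTpdef]; simp [Finset.mem_Icc, and_assoc]
  have hTpne : ∀ p ∈ Fp, (Tp p).Nonempty := by
    intro p hp
    obtain ⟨hb, m, h1, h2, h3⟩ := (hmemFp p).mp hp
    exact ⟨m, (hmemTp p m).mpr ⟨⟨h1, h2⟩, h3⟩⟩
  set d0 : Fin n := ⟨0, by omega⟩ with hd0
  set t0 : Fin n × Fin n → Fin n :=
    fun p => if h : (Tp p).Nonempty then (Tp p).min' h else d0 with ht0def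
  set t1 : Fin n × Fin n → Fin n :=
    fun p => if h : (Tp p).Nonempty then (Tp p).max' h else d0 with ht1def
  have ht0mem : ∀ p ∈ Fp, t0 p ∈ Tp p := by
    intro p hp; rw [ht0def]; simp only [dif_pos (hTpne p hp)]; exact Finset.min'_mem _ _
  have ht1mem : ∀ p ∈ Fp, t1 p ∈ Tp p := by
    intro p hp; rw [ht1def]; simp only [dif_pos (hTpne p hp)]; exact Finset.max'_mem _ _
  have ht0min : ∀ p ∈ Fp, ∀ t ∈ Tp p, t0 p ≤ t := by
    intro p hp t ht; rw [ht0def]; simp only [dif_pos (hTpne p hp)]; exact Finset.min'_le _ _ ht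
  have ht1max : ∀ p ∈ Fp, ∀ t ∈ Tp p, t ≤ t1 p := by
    intro p hp t ht; rw [ht1def]; simp only [dif_pos (hTpne p hp)]; exact Finset.le_max' _ _ ht
  -- the core bound
  have hcore : ∀ p ∈ Fp, (t1 p : ℕ) + 1 - (t0 p : ℕ) ≤ Λ + 2 * k + 4 * K + 4 := by
    intro p hp
    obtain ⟨⟨hba, harc⟩, -⟩ := (hmemFp p).mp hp
    obtain ⟨⟨hat₀, ht₀b⟩, ht₀T⟩ := (hmemTp p (t0 p)).mp (ht0mem p hp)
    obtain ⟨⟨hat₁, ht₁b⟩, ht₁T⟩ := (hmemTp p (t1 p)).mp (ht1mem p hp)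
    have ht01 : t0 p ≤ t1 p := ht1max p hp _ (ht0mem p hp)
    -- terminals m of the span with few unaffected positions in (t₀, m)
    set M : Finset (Fin n) :=
      (Tp p).filter (fun m => ((Finset.Ioo (t0 p) m).filter (· ∉ W)).card ≤ k) with hM
    have hMne : M.Nonempty := by
      refine ⟨t0 p, ?_⟩
      rw [hM, Finset.mem_filter]
      exact ⟨ht0mem p hp, by simp⟩
    set m₁ : Fin n := M.max' hMne with hm₁
    have hm₁M : m₁ ∈ M := by rw [hm₁]; exact M.max'_mem hMne
    rw [hM, Finset.mem_filter] at hm₁M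
    obtain ⟨hm₁Tp, hm₁k⟩ := hm₁M
    have ht₀m₁ : t0 p ≤ m₁ := ht0min p hp _ hm₁Tp
    have hm₁t₁ : m₁ ≤ t1 p := ht1max p hp _ hm₁Tp
    have hIoo1 : ((m₁ : ℕ) - (t0 p : ℕ) - 1) ≤ k + (K + K) := by
      have h1 : (Finset.Ioo (t0 p) m₁).card ≤ k + W.card := by
        rw [← Finset.card_filter_add_card_filter_not
          (s := Finset.Ioo (t0 p) m₁) (p := (· ∉ W))]
        refine add_le_add hm₁k (le_trans (Finset.card_le_card ?_) le_rfl)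
        intro x hx
        simp only [Finset.mem_filter, not_not] at hx
        exact hx.2
      rw [Fin.card_Ioo] at h1
      omega
    by_cases hex : ∃ m' ∈ Tp p, m₁ < m'
    · -- there is a terminal beyond m₁; take the least such
      set M2 : Finset (Fin n) := (Tp p).filter (fun m' => m₁ < m') with hM2
      have hM2ne : M2.Nonempty := by
        obtain ⟨m', hm', hlt⟩ := hex
        exact ⟨m', by rw [hM2, Finset.mem_filter]; exact ⟨hm', hlt⟩⟩
      set m₂ : Fin n := M2.min' hM2ne with hm₂
      have hm₂M2 : m₂ ∈ M2 := by rw [hm₂]; exact M2.min'_mem hM2ne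
      rw [hM2, Finset.mem_filter] at hm₂M2
      obtain ⟨hm₂Tp, hm₁m₂⟩ := hm₂M2
      obtain ⟨⟨ham₂, hm₂b⟩, hm₂T⟩ := (hmemTp p m₂).mp hm₂Tp
      have ht₀m₂ : t0 p ≤ m₂ := ht0min p hp _ hm₂Tp
      have hm₂t₁ : m₂ ≤ t1 p := ht1max p hp _ hm₂Tp
      -- (t₀, m₂) has many unaffected positions
      have hLm₂ : ¬ ((Finset.Ioo (t0 p) m₂).filter (· ∉ W)).card ≤ k := by
        intro hle
        have : m₂ ∈ M := by
          rw [hM, Finset.mem_filter]; exact ⟨hm₂Tp, hle⟩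
        exact absurd (M.le_max' _ this) (not_le.mpr hm₁m₂)
      -- hence (m₂, t₁) has few
      have hRm₂ : ((Finset.Ioo m₂ (t1 p)).filter (· ∉ W)).card ≤ k := by
        rcases sfast_dichotomy hA hred W hWmem hba harc ht₀T ht₁T hm₂T hat₀ ht₀m₂
          hm₂t₁ ht₁b with h | h
        · exact absurd h hLm₂
        · exact h
      have hIoo2 : ((t1 p : ℕ) - (m₂ : ℕ) - 1) ≤ k + (K + K) := by
        have h1 : (Finset.Ioo m₂ (t1 p)).card ≤ k + W.card := by
          rw [← Finset.card_filter_add_card_filter_not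
            (s := Finset.Ioo m₂ (t1 p)) (p := (· ∉ W))]
          refine add_le_add hRm₂ (Finset.card_le_card ?_)
          intro x hx
          simp only [Finset.mem_filter, not_not] at hx
          exact hx.2
        rw [Fin.card_Ioo] at h1
        omega
      -- (m₁, m₂) is terminal-free
      have hfree : ∀ x : Fin n, m₁ < x → x < m₂ → σ x ∉ T := by
        intro x h1 h2 hxT
        have hxTp : x ∈ Tp p := by
          refine (hmemTp p x).mpr ⟨⟨?_, ?_⟩, hxT⟩
          · exact le_trans hat₀ (le_trans ht₀m₁ (le_of_lt h1))
          · exact le_trans (le_of_lt h2) hm₂b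
        have : x ∈ M2 := by rw [hM2, Finset.mem_filter]; exact ⟨hxTp, h1⟩
        exact absurd (M2.min'_le _ this) (not_le.mpr h2)
      have hmid : (m₂ : ℕ) - (m₁ : ℕ) - 1 ≤ Λ := by
        by_cases hcase : (m₁ : ℕ) + 1 ≤ (m₂ : ℕ) - 1
        · have hm₂n : (m₂ : ℕ) < n := m₂.isLt
          have hl : (m₁ : ℕ) + 1 < n := by omega
          have hr : (m₂ : ℕ) - 1 < n := by omega
          have := hint ⟨(m₁ : ℕ) + 1, hl⟩ ⟨(m₂ : ℕ) - 1, hr⟩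
            (by rw [Fin.le_def]; exact hcase)
            (by
              intro x hx1 hx2
              rw [Fin.le_def] at hx1 hx2
              refine hfree x ?_ ?_
              · rw [Fin.lt_def]; simp at hx1 ⊢; omega
              · rw [Fin.lt_def]; simp at hx2 ⊢; omega)
          simp at this
          omega
        · omega
      have hm₁m₂' : (m₁ : ℕ) < (m₂ : ℕ) := hm₁m₂
      have ht₀m₁' : (t0 p : ℕ) ≤ (m₁ : ℕ) := ht₀m₁
      have hm₂t₁' : (m₂ : ℕ) ≤ (t1 p : ℕ) := hm₂t₁
      omega
    · -- all terminals are at most m₁, so t₁ = m₁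
      push_neg at hex
      have : t1 p ≤ m₁ := hex _ (ht1mem p hp)
      have ht1m₁ : (t1 p : ℕ) ≤ (m₁ : ℕ) := this
      have hm₁t₁' : (m₁ : ℕ) ≤ (t1 p : ℕ) := hm₁t₁
      have ht₀m₁' : (t0 p : ℕ) ≤ (m₁ : ℕ) := ht₀m₁
      omega
  -- the union of cores
  set U : Finset (Fin n) := Fp.biUnion (fun p => Finset.Icc (t0 p) (t1 p)) with hUdef
  have hUcard : U.card ≤ K * (Λ + 2 * k + 4 * K + 4) := by
    calc U.card ≤ ∑ p ∈ Fp, (Finset.Icc (t0 p) (t1 p)).card := Finset.card_biUnion_le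
    _ ≤ Fp.card • (Λ + 2 * k + 4 * K + 4) := by
        refine Finset.sum_le_card_nsmul Fp _ (Λ + 2 * k + 4 * K + 4) ?_
        intro p hp
        rw [Fin.card_Icc]
        exact hcore p hp
    _ = Fp.card * (Λ + 2 * k + 4 * K + 4) := smul_eq_mul _ _
    _ ≤ K * (Λ + 2 * k + 4 * K + 4) := Nat.mul_le_mul_right _ hFcard
  have hUt : ∀ x : Fin n, σ x ∈ T → x ∈ U := by
    intro x hx
    obtain ⟨p, hpa, h1, h2⟩ := hterm x hx
    have hp : p ∈ Fp := (hmemFp p).mpr hpa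
    have hxTp : x ∈ Tp p := (hmemTp p x).mpr ⟨⟨h1, h2⟩, hx⟩
    rw [hUdef]
    exact Finset.mem_biUnion.mpr ⟨p, hp,
      Finset.mem_Icc.mpr ⟨ht0min p hp x hxTp, ht1max p hp x hxTp⟩⟩
  -- gap starts
  set G : Fin n → Finset (Fin n) := fun q =>
    Finset.univ.filter (fun u => u ≤ q ∧ ∀ x : Fin n, u ≤ x → x ≤ q → x ∉ U) with hGdef
  have hGself : ∀ q : Fin n, q ∉ U → q ∈ G q := by
    intro q hq
    rw [hGdef, Finset.mem_filter]
    refine ⟨Finset.mem_univ q, le_refl q, ?_⟩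
    intro x h1 h2
    have : x = q := le_antisymm h2 h1
    rwa [this]
  set st : Fin n → Fin n := fun q =>
    if h : (G q).Nonempty then (G q).min' h else q with hstdef
  have hstG : ∀ q : Fin n, q ∉ U → st q ∈ G q := by
    intro q hq
    have hne : (G q).Nonempty := ⟨q, hGself q hq⟩
    rw [hstdef]
    simp only [dif_pos hne]
    exact Finset.min'_mem _ _
  have hstle : ∀ q : Fin n, q ∉ U → st q ≤ q := by
    intro q hq
    have := hstG q hq
    rw [hGdef, Finset.mem_filter] at this
    exact this.2.1
  have hstfree : ∀ q : Fin n, q ∉ U → ∀ x : Fin n, st q ≤ x → x ≤ q → x ∉ U := by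
    intro q hq
    have := hstG q hq
    rw [hGdef, Finset.mem_filter] at this
    exact this.2.2
  have hstmin : ∀ q : Fin n, q ∉ U → ∀ u ∈ G q, st q ≤ u := by
    intro q hq u hu
    have hne : (G q).Nonempty := ⟨q, hGself q hq⟩
    rw [hstdef]
    simp only [dif_pos hne]
    exact Finset.min'_le _ _ hu
  have hstlen : ∀ q : Fin n, q ∉ U → (q : ℕ) - (st q : ℕ) + 1 ≤ Λ := by
    intro q hq
    have := hint (st q) q (hstle q hq) (by
      intro x h1 h2 hxT
      exact hstfree q hq x h1 h2 (hUt x hxT))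
    exact this
  have hstnear : ∀ q : Fin n, q ∉ U →
      (st q : ℕ) = 0 ∨ ∃ p ∈ Fp, (st q : ℕ) = (t1 p : ℕ) + 1 := by
    intro q hq
    by_cases h0 : (st q : ℕ) = 0
    · exact Or.inl h0
    · right
      have hwlt : (st q : ℕ) - 1 < n := by have := (st q).isLt; omega
      set w : Fin n := ⟨(st q : ℕ) - 1, hwlt⟩ with hw
      by_cases hwU : w ∈ U
      · rw [hUdef] at hwU
        obtain ⟨p, hp, hwIcc⟩ := Finset.mem_biUnion.mp hwU
        rw [Finset.mem_Icc] at hwIcc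
        refine ⟨p, hp, ?_⟩
        have h1 : (w : ℕ) ≤ (t1 p : ℕ) := hwIcc.2
        have h2 : (t0 p : ℕ) ≤ (w : ℕ) := hwIcc.1
        have hwv : (w : ℕ) = (st q : ℕ) - 1 := rfl
        by_contra hne
        -- then st q is still inside the core of p, contradiction
        have hstin : st q ∈ Finset.Icc (t0 p) (t1 p) := by
          rw [Finset.mem_Icc, Fin.le_def, Fin.le_def]
          omega
        have : st q ∈ U := by
          rw [hUdef]; exact Finset.mem_biUnion.mpr ⟨p, hp, hstin⟩
        exact hstfree q hq (st q) (le_refl _) (hstle q hq) this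
      · exfalso
        have hwG : w ∈ G q := by
          rw [hGdef, Finset.mem_filter]
          refine ⟨Finset.mem_univ w, ?_, ?_⟩
          · have := hstle q hq
            rw [Fin.le_def] at this ⊢
            simp only [hw]
            omega
          · intro x h1 h2
            by_cases hxw : x = w
            · rwa [hxw]
            · refine hstfree q hq x ?_ h2
              rw [Fin.le_def] at h1 ⊢
              have : (w : ℕ) ≠ (x : ℕ) := fun h => hxw (Fin.ext h.symm)
              simp only [hw] at h1 this
              omega
        have := hstmin q hq w hwG
        rw [Fin.le_def] at this
        simp only [hw] at this
        omega
  -- counting the complement of U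
  set S : Finset (Fin n) := insert d0 (Fp.image (fun p => t1 p + 1)) with hSdef
  have hgap : (Finset.univ \ U).card ≤ S.card * Λ := by
    have := Finset.card_le_card_of_injOn
      (f := fun q : Fin n => ((st q, (q : ℕ) - (st q : ℕ)) : Fin n × ℕ))
      (s := Finset.univ \ U) (t := S ×ˢ Finset.range Λ) ?_ ?_
    · rwa [Finset.card_product, Finset.card_range] at this
    · intro q hq
      rw [Finset.mem_coe, Finset.mem_sdiff] at hq
      have hqU := hq.2
      have hmem1 : st q ∈ S := by
        rcases hstnear q hqU with h | ⟨p, hp, h⟩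
        · have heq0 : st q = d0 := by rw [Fin.ext_iff, hd0]; exact h
          rw [hSdef, heq0]
          exact Finset.mem_insert_self _ _
        · rw [hSdef]
          refine Finset.mem_insert_of_mem (Finset.mem_image.mpr ⟨p, hp, ?_⟩)
          have hstlt : (st q : ℕ) < n := (st q).isLt
          have h1n : ((1 : Fin n) : ℕ) = 1 := by
            rw [Fin.val_one']
            exact Nat.mod_eq_of_lt (by omega)
          rw [Fin.ext_iff, Fin.val_add, h1n, Nat.mod_eq_of_lt (by omega)]
          omega
      have hmem2 : (q : ℕ) - (st q : ℕ) ∈ Finset.range Λ := by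
        rw [Finset.mem_range]
        have := hstlen q hqU
        omega
      show (st q, (q : ℕ) - (st q : ℕ)) ∈ S ×ˢ Finset.range Λ
      rw [Finset.mem_product]
      exact ⟨hmem1, hmem2⟩
    · intro q1 hq1 q2 hq2 heq
      simp only [Finset.coe_sdiff, Set.mem_diff, Finset.coe_univ, Finset.mem_coe] at hq1 hq2
      have hq1U : q1 ∉ U := fun h => hq1.2 h
      have hq2U : q2 ∉ U := fun h => hq2.2 h
      have h1 := hstle q1 hq1U
      have h2 := hstle q2 hq2U
      rw [Prod.mk.injEq] at heq
      obtain ⟨ha, hb⟩ := heq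
      rw [Fin.ext_iff] at ha ⊢
      rw [Fin.le_def] at h1 h2
      omega
  have hScard : S.card ≤ K + 1 := by
    rw [hSdef]
    refine le_trans (Finset.card_insert_le _ _) ?_
    exact Nat.add_le_add_right (le_trans Finset.card_image_le hFcard) 1
  -- put everything together
  have hsplit : n ≤ U.card + (Finset.univ \ U).card := by
    have h1 : (Finset.univ \ U).card = Finset.univ.card - U.card :=
      Finset.card_sdiff_of_subset (Finset.subset_univ U)
    have h2 : (Finset.univ : Finset (Fin n)).card = n := by
      rw [Finset.card_univ, Fintype.card_fin]
    have h3 : U.card ≤ n := by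
      have := Finset.card_le_univ U
      rwa [Fintype.card_fin] at this
    omega
  have htotal : n ≤ K * (Λ + 2 * k + 4 * K + 4) + (K + 1) * Λ := by
    calc n ≤ U.card + (Finset.univ \ U).card := hsplit
    _ ≤ K * (Λ + 2 * k + 4 * K + 4) + S.card * Λ := add_le_add hUcard hgap
    _ ≤ K * (Λ + 2 * k + 4 * K + 4) + (K + 1) * Λ :=
        Nat.add_le_add_left (Nat.mul_le_mul_right _ hScard) _
  have hfinal : K * (Λ + 2 * k + 4 * K + 4) + (K + 1) * Λ + 2 * β * k ^ 2
      = 6 * β * (3 * β + 5) * k ^ 2 + (21 * β + 13) * k + 5 := by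
    subst hK hΛ
    ring
  omega
end

section
/- If σ is an order of a tournament D with terminal set T and S is the set of affected arcs of σ, then S is a T-feedback arc set of D; conversely if S is a T-feedback arc set, there exists an order σ whose set of affected arcs is contained in S (obtained from a topological order of the strongly connected components of D − S). -/
open List

/-- Every element in the tail of a chain has a predecessor. -/
lemma chain_pred' {α : Type} {R : α → α → Prop} :
    ∀ (L : List α) (c : α), List.Chain R c L → ∀ b ∈ L, ∃ x, (x = c ∨ x ∈ L) ∧ R x b := by
  intro L
  induction L with
  | nil => intro c _ b hb; simp at hb
  | cons d L' ih =>
    intro c hc b hb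
    simp only [List.Chain, List.isChain_cons_cons] at hc
    rcases List.mem_cons.mp hb with rfl | hb'
    · exact ⟨c, Or.inl rfl, hc.1⟩
    · obtain ⟨x, hx, hR⟩ := ih d hc.2 b hb'
      rcases hx with rfl | hx
      · exact ⟨x, Or.inr List.mem_cons_self, hR⟩
      · exact ⟨x, Or.inr (List.mem_cons_of_mem _ hx), hR⟩

lemma chain_all_ge {n : ℕ} {R : Fin n → Fin n → Prop} {m : Fin n}
    (hstep : ∀ x y, R x y → m ≤ x → m ≤ y) :
    ∀ (L : List (Fin n)) (c : Fin n), List.Chain R c L → m ≤ c → ∀ z ∈ L, m ≤ z := by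
  intro L
  induction L with
  | nil => intro c _ _ z hz; simp at hz
  | cons d L' ih =>
    intro c hc hmc z hz
    simp only [List.Chain, List.isChain_cons_cons] at hc
    have hmd : m ≤ d := hstep c d hc.1 hmc
    rcases List.mem_cons.mp hz with rfl | hz'
    · exact hmd
    · exact ih d hc.2 hmd z hz'

lemma chain_last_ge {n : ℕ} {R : Fin n → Fin n → Prop} {m : Fin n}
    (hstep : ∀ x y, R x y → m ≤ x → m ≤ y) :
    ∀ (L : List (Fin n)) (c : Fin n), List.Chain R c L → (m ≤ c ∨ m ∈ L) →
      ∀ z, (c :: L).getLast? = some z → m ≤ z := by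
  intro L
  induction L with
  | nil =>
    intro c _ hm z hz
    simp only [List.getLast?_singleton, Option.some.injEq] at hz
    subst hz
    rcases hm with h | h
    · exact h
    · simp at h
  | cons d L' ih =>
    intro c hc hm z hz
    simp only [List.Chain, List.isChain_cons_cons] at hc
    have hz' : (d :: L').getLast? = some z := by
      simpa using hz
    apply ih d hc.2 _ z hz'
    rcases hm with h | h
    · exact Or.inl (hstep c d hc.1 h)
    · rcases List.mem_cons.mp h with rfl | h'
      · exact Or.inl le_rfl
      · exact Or.inr h'

/-- Key lemma: closed walk through position `m` must contain a backward arc spanning `m`. -/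
lemma no_cycle_aux {n : ℕ} {R : Fin n → Fin n → Prop} {m a : Fin n} {l : List (Fin n)}
    (hchain : List.Chain R a (l ++ [a])) (hm : m = a ∨ m ∈ l)
    (hirr : ∀ x, ¬ R x x)
    (hno : ∀ x y, R x y → ¬(y < x ∧ y ≤ m ∧ m ≤ x)) : False := by
  have hstep : ∀ x y, R x y → m ≤ x → m ≤ y := by
    intro x y hR hmx
    by_contra hy
    push_neg at hy
    exact hno x y hR ⟨lt_of_lt_of_le hy hmx, le_of_lt hy, hmx⟩
  have hlast : (a :: (l ++ [a])).getLast? = some a := by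
    rw [show a :: (l ++ [a]) = (a :: l) ++ [a] by simp]
    exact List.getLast?_concat
  have hma : m ≤ a := by
    apply chain_last_ge hstep (l ++ [a]) a hchain _ a hlast
    rcases hm with rfl | h
    · exact Or.inl le_rfl
    · exact Or.inr (List.mem_append_left _ h)
  have hall : ∀ z ∈ l ++ [a], m ≤ z := chain_all_ge hstep _ _ hchain hma
  have hmem : m ∈ l ++ [a] := by
    rcases hm with rfl | h
    · exact List.mem_append_right _ (List.mem_singleton_self _)
    · exact List.mem_append_left _ h
  obtain ⟨x, hx, hR⟩ := chain_pred' _ _ hchain m hmem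
  have hmx : m ≤ x := by
    rcases hx with rfl | hx
    · exact hma
    · exact hall x hx
  have hxm : x ≠ m := by rintro rfl; exact hirr x hR
  exact hno x m hR ⟨lt_of_le_of_ne hmx (Ne.symm hxm), le_rfl, hmx⟩

lemma reach_chain {V : Type} {B : V → V → Prop} {a b : V}
    (h : Relation.ReflTransGen B a b) :
    a = b ∨ ∃ L, List.Chain B a (L ++ [b]) := by
  induction h using Relation.ReflTransGen.head_induction_on with
  | refl => exact Or.inl rfl
  | @head x c h' _ ih =>
    right
    rcases ih with rfl | ⟨L, hL⟩
    · exact ⟨[], by simpa [List.Chain] using h'⟩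
    · exact ⟨c :: L, by rw [List.cons_append]; simp only [List.Chain, List.isChain_cons_cons]; exact ⟨h', hL⟩⟩

lemma glue_cycle {V : Type} {B : V → V → Prop} {t u1 u2 : V}
    (hne : u1 ≠ u2) (h1 : Relation.ReflTransGen B t u1) (h2 : B u1 u2)
    (h3 : Relation.ReflTransGen B u2 t) :
    ∃ l, List.Chain B t (l ++ [t]) := by
  rcases reach_chain h1 with rfl | ⟨L1, hc1⟩
  · rcases reach_chain h3 with rfl | ⟨L2, hc2⟩
    · exact absurd rfl hne
    · exact ⟨u2 :: L2, by rw [List.cons_append]; simp only [List.Chain, List.isChain_cons_cons]; exact ⟨h2, hc2⟩⟩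
  · rcases reach_chain h3 with rfl | ⟨L2, hc2⟩
    · refine ⟨L1 ++ [u1], ?_⟩
      rw [show (L1 ++ [u1]) ++ [u2] = L1 ++ u1 :: [u2] by simp]
      simp only [List.Chain]; rw [List.isChain_cons_split]
      exact ⟨hc1, List.isChain_pair.mpr h2⟩
    · refine ⟨L1 ++ u1 :: u2 :: L2, ?_⟩
      rw [show (L1 ++ u1 :: u2 :: L2) ++ [t] = L1 ++ u1 :: (u2 :: (L2 ++ [t])) by simp]
      simp only [List.Chain]; rw [List.isChain_cons_split, List.isChain_cons_cons]
      exact ⟨hc1, h2, hc2⟩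
/-- the set of affected arcs of any order is a `T`-feedback arc set;
conversely, every `T`-feedback arc set `S` admits an order whose affected arcs all
belong to `S`. -/
theorem stmt16 {n : ℕ} (A : Fin n → Fin n → Prop) (hA : IsTournament A)
    (T : Set (Fin n)) :
    (∀ σ : Equiv.Perm (Fin n),
      IsTFAS A T
        {e : Fin n × Fin n |
          ∃ p : Fin n × Fin n, AffectedPair A σ T p ∧ e = (σ p.1, σ p.2)}) ∧
    (∀ S : Set (Fin n × Fin n), IsTFAS A T S →
      ∃ σ : Equiv.Perm (Fin n),
        {e : Fin n × Fin n |
          ∃ p : Fin n × Fin n, AffectedPair A σ T p ∧ e = (σ p.1, σ p.2)} ⊆ S) := by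
  constructor
  · -- Part 1: affected arcs form a T-FAS
    intro σ
    constructor
    · rintro e ⟨p, ⟨⟨_, hadj⟩, _⟩, rfl⟩
      exact hadj
    · rintro ⟨v, l, hchain, hT⟩
      have hchain' : List.Chain
          (fun x y => A (σ x) (σ y) ∧ (σ x, σ y) ∉
            {e : Fin n × Fin n |
              ∃ p : Fin n × Fin n, AffectedPair A σ T p ∧ e = (σ p.1, σ p.2)})
          (σ.symm v) (List.map (⇑σ.symm) l ++ [σ.symm v]) := by
        apply (List.isChain_map (⇑σ)
          (R := fun u w => A u w ∧ (u, w) ∉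
            {e : Fin n × Fin n |
              ∃ p : Fin n × Fin n, AffectedPair A σ T p ∧ e = (σ p.1, σ p.2)})).mp
        simpa [List.map_map, List.Chain] using hchain
      obtain ⟨m, hm, hmT⟩ :
          ∃ m : Fin n, (m = σ.symm v ∨ m ∈ List.map (⇑σ.symm) l) ∧ σ m ∈ T := by
        rcases hT with hv | ⟨t, htl, htT⟩
        · exact ⟨σ.symm v, Or.inl rfl, by simpa using hv⟩
        · exact ⟨σ.symm t, Or.inr (List.mem_map_of_mem htl), by simpa using htT⟩
      apply no_cycle_aux hchain' hm
      · rintro x ⟨hxx, -⟩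
        exact hA.1 _ hxx
      · rintro x y ⟨hAxy, hnS⟩ ⟨hlt, h1, h2⟩
        exact hnS ⟨(x, y), ⟨⟨hlt, hAxy⟩, m, h1, h2, hmT⟩, rfl⟩
  · -- Part 2: topological order of SCCs of D − S
    intro S hS
    set B : Fin n → Fin n → Prop := fun u w => A u w ∧ (u, w) ∉ S with hBdef
    let st : Setoid (Fin n) :=
      ⟨fun u v => Relation.ReflTransGen B u v ∧ Relation.ReflTransGen B v u,
        ⟨fun _ => ⟨.refl, .refl⟩, fun h => ⟨h.2, h.1⟩,
          fun h h' => ⟨h.1.trans h'.1, h'.2.trans h.2⟩⟩⟩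
    let po : Quotient st → Quotient st → Prop :=
      Quotient.lift₂ (fun u v => Relation.ReflTransGen B u v)
        (fun _ _ _ _ hac hbd => propext
          ⟨fun h => hac.2.trans (h.trans hbd.1), fun h => hac.1.trans (h.trans hbd.2)⟩)
    haveI hpo : IsPartialOrder (Quotient st) po :=
      { refl := fun q => Quotient.inductionOn q (fun _ => Relation.ReflTransGen.refl)
        trans := fun q r u => Quotient.inductionOn₃ q r u (fun _ _ _ h1 h2 => h1.trans h2)
        antisymm := fun q r => Quotient.inductionOn₂ q r
          (fun _ _ h1 h2 => Quotient.sound ⟨h1, h2⟩) }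
    obtain ⟨s, hlin, hsub⟩ := extend_partialOrder po
    haveI := hlin
    haveI : Finite (Quotient st) := Quotient.finite st
    set f : Fin n → ℕ := fun v => {q : Quotient st | s q (Quotient.mk st v)}.ncard with hfdef
    have hmono : ∀ u v : Fin n, Relation.ReflTransGen B u v → f u ≤ f v := by
      intro u v h
      apply Set.ncard_le_ncard _ (Set.toFinite _)
      intro q hq
      exact IsTrans.trans _ _ _ hq (hsub (Quotient.mk st u) (Quotient.mk st v) h)
    have hkey : ∀ u v : Fin n, s (Quotient.mk st u) (Quotient.mk st v) → f u = f v →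
        Relation.ReflTransGen B u v ∧ Relation.ReflTransGen B v u := by
      intro u v hsuv hf
      have hsub' : {q : Quotient st | s q (Quotient.mk st u)} ⊆
          {q : Quotient st | s q (Quotient.mk st v)} :=
        fun q hq => IsTrans.trans _ _ _ hq hsuv
      have heq := Set.eq_of_subset_of_ncard_le hsub' (le_of_eq hf.symm) (Set.toFinite _)
      have hvu : s (Quotient.mk st v) (Quotient.mk st u) := by
        have hm : Quotient.mk st v ∈ {q : Quotient st | s q (Quotient.mk st v)} :=
          refl_of s _
        rw [← heq] at hm
        exact hm
      have := antisymm_of s hsuv hvu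
      exact Quotient.exact this
    have hclass : ∀ u v : Fin n, f u = f v →
        Relation.ReflTransGen B u v ∧ Relation.ReflTransGen B v u := by
      intro u v hf
      rcases Std.Total.total (r := s) (Quotient.mk st u) (Quotient.mk st v) with h | h
      · exact hkey u v h hf
      · exact (hkey v u h hf.symm).symm
    refine ⟨Tuple.sort f, ?_⟩
    intro e he
    obtain ⟨p, ⟨⟨hlt, hadj⟩, m, hm1, hm2, hmT⟩, rfl⟩ := he
    set σ := Tuple.sort f with hσdef
    by_contra hne
    have hB : B (σ p.1) (σ p.2) := ⟨hadj, hne⟩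
    have hmon : Monotone (f ∘ σ) := Tuple.monotone_sort f
    have h12 : f (σ p.1) ≤ f (σ p.2) := hmono _ _ (Relation.ReflTransGen.single hB)
    have h2m : f (σ p.2) ≤ f (σ m) := hmon hm1
    have hm1' : f (σ m) ≤ f (σ p.1) := hmon hm2
    have e1 : f (σ m) = f (σ p.1) := le_antisymm hm1' (h12.trans h2m)
    have e2 : f (σ p.2) = f (σ m) := le_antisymm h2m (hm1'.trans h12)
    have hr1 : Relation.ReflTransGen B (σ m) (σ p.1) := (hclass _ _ e1).1
    have hr2 : Relation.ReflTransGen B (σ p.2) (σ m) := (hclass _ _ e2).1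
    have hne12 : σ p.1 ≠ σ p.2 := fun h => absurd (σ.injective h) (ne_of_gt hlt)
    obtain ⟨l, hc⟩ := glue_cycle hne12 hr1 hB hr2
    exact hS.2 ⟨σ m, l, hc, Or.inl hmT⟩
end

section
/- Let I = [v_l, v_r] be an interval in an order σ of a tournament, let J = [v_l, v_i] ⊆ I be split as X = [v_l, v_{j−1}] (non-terminal) and Y = [v_j, v_i]. If |N⁺_X(v_l)| ≥ ⌈(j−1−l)/2⌉, then |N⁺_X(v_l) ∩ N⁻_X(v_i)| ≥ (j−l−1)/2 − |N⁺_X(v_i)| and |N⁺_Y(v_l) ∩ N⁻_Y(v_i)| ≥ max{(i−j) − |N⁻_Y(v_l)| − |N⁺_Y(v_i)|, 0}; consequently, if i − l ≥ ℓ + 1 and |N⁺_X(v_i)| + |N⁺_Y(v_i)| + |N⁻_Y(v_l)| ≤ βk with ℓ = 2(β+1)k + 2, then |N⁺_J(v_l) ∩ N⁻_J(v_i)| ≥ k + 1. -/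

private lemma aux_inter_ncard {n : ℕ} (R S P Q : Fin n → Prop) :
    {m : Fin n | R m ∧ S m ∧ P m}.ncard + {m : Fin n | R m ∧ S m ∧ Q m}.ncard ≤
      {m : Fin n | R m ∧ S m}.ncard + {m : Fin n | R m ∧ S m ∧ P m ∧ Q m}.ncard := by
  have h1 : {m : Fin n | R m ∧ S m ∧ P m} ∩ {m : Fin n | R m ∧ S m ∧ Q m}
      = {m : Fin n | R m ∧ S m ∧ P m ∧ Q m} := by
    ext m; simp only [Set.mem_inter_iff, Set.mem_setOf_eq]; tauto
  have h2 := Set.ncard_union_add_ncard_inter {m : Fin n | R m ∧ S m ∧ P m}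
    {m : Fin n | R m ∧ S m ∧ Q m} (Set.toFinite _) (Set.toFinite _)
  have h3 : ({m : Fin n | R m ∧ S m ∧ P m} ∪ {m : Fin n | R m ∧ S m ∧ Q m}).ncard
      ≤ {m : Fin n | R m ∧ S m}.ncard := by
    apply Set.ncard_le_ncard _ (Set.toFinite _)
    rintro m (⟨h1, h2, _⟩ | ⟨h1, h2, _⟩) <;> exact ⟨h1, h2⟩
  rw [h1] at h2
  omega

private lemma aux_cover_ncard {n : ℕ} (R S P Q : Fin n → Prop)
    (h : ∀ m, R m → S m → P m ∨ Q m) :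
    {m : Fin n | R m ∧ S m}.ncard ≤
      {m : Fin n | R m ∧ S m ∧ P m}.ncard + {m : Fin n | R m ∧ S m ∧ Q m}.ncard := by
  have hsub : {m : Fin n | R m ∧ S m} ⊆
      {m : Fin n | R m ∧ S m ∧ P m} ∪ {m : Fin n | R m ∧ S m ∧ Q m} := by
    rintro m ⟨h1, h2⟩
    rcases h m h1 h2 with hP | hQ
    · exact Or.inl ⟨h1, h2, hP⟩
    · exact Or.inr ⟨h1, h2, hQ⟩
  exact le_trans (Set.ncard_le_ncard hsub (Set.toFinite _)) (Set.ncard_union_le _ _)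

private lemma aux_cover_ncard' {n : ℕ} (R S P Q : Fin n → Prop) (i0 : Fin n)
    (h : ∀ m, R m → S m → P m ∨ Q m ∨ m = i0) :
    {m : Fin n | R m ∧ S m}.ncard ≤
      {m : Fin n | R m ∧ S m ∧ P m}.ncard + {m : Fin n | R m ∧ S m ∧ Q m}.ncard + 1 := by
  have h0 : {m : Fin n | R m ∧ S m}.ncard ≤
      {m : Fin n | R m ∧ S m ∧ P m}.ncard +
      {m : Fin n | R m ∧ S m ∧ (Q m ∨ m = i0)}.ncard :=
    aux_cover_ncard R S P (fun m => Q m ∨ m = i0) (by tauto)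
  have h1 : {m : Fin n | R m ∧ S m ∧ (Q m ∨ m = i0)}.ncard ≤
      {m : Fin n | R m ∧ S m ∧ Q m}.ncard + 1 := by
    have hsub : {m : Fin n | R m ∧ S m ∧ (Q m ∨ m = i0)} ⊆
        {m : Fin n | R m ∧ S m ∧ Q m} ∪ {i0} := by
      rintro m ⟨h1, h2, hQ | he⟩
      · exact Or.inl ⟨h1, h2, hQ⟩
      · exact Or.inr he
    calc {m : Fin n | R m ∧ S m ∧ (Q m ∨ m = i0)}.ncard
        ≤ ({m : Fin n | R m ∧ S m ∧ Q m} ∪ {i0}).ncard :=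
          Set.ncard_le_ncard hsub (Set.toFinite _)
      _ ≤ {m : Fin n | R m ∧ S m ∧ Q m}.ncard + ({i0} : Set (Fin n)).ncard :=
          Set.ncard_union_le _ _
      _ = {m : Fin n | R m ∧ S m ∧ Q m}.ncard + 1 := by rw [Set.ncard_singleton]
  omega

/-- the counting core of the terminal-location lemma, with
`X = [l, j-1]` non-terminal, `Y = [j, i]`, `J = [l, i]`, and `ℓ = 2(β+1)k + 2`. -/
theorem stmt17 {n : ℕ} (A : Fin n → Fin n → Prop) (hA : IsTournament A)
    (T : Set (Fin n)) (σ : Equiv.Perm (Fin n)) (β k : ℕ)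
    (l j i : Fin n) (hlj : l < j) (hji : j ≤ i)
    (hX : ∀ m : Fin n, l ≤ m → m < j → σ m ∉ T)
    (hXl : (((j : ℕ) - (l : ℕ) - 1) + 1) / 2 ≤
      {m : Fin n | l ≤ m ∧ m < j ∧ A (σ l) (σ m)}.ncard) :
    (((j : ℚ) - (l : ℕ) - 1) / 2 -
        ({m : Fin n | l ≤ m ∧ m < j ∧ A (σ i) (σ m)}.ncard : ℚ) ≤
      ({m : Fin n | l ≤ m ∧ m < j ∧ A (σ l) (σ m) ∧ A (σ m) (σ i)}.ncard : ℚ)) ∧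
    (((i : ℕ) - (j : ℕ)) -
        {m : Fin n | j ≤ m ∧ m ≤ i ∧ A (σ m) (σ l)}.ncard -
        {m : Fin n | j ≤ m ∧ m ≤ i ∧ A (σ i) (σ m)}.ncard ≤
      {m : Fin n | j ≤ m ∧ m ≤ i ∧ A (σ l) (σ m) ∧ A (σ m) (σ i)}.ncard) ∧
    ((l : ℕ) + (2 * (β + 1) * k + 2) + 1 ≤ (i : ℕ) →
      {m : Fin n | l ≤ m ∧ m < j ∧ A (σ i) (σ m)}.ncard +
        {m : Fin n | j ≤ m ∧ m ≤ i ∧ A (σ i) (σ m)}.ncard +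
        {m : Fin n | j ≤ m ∧ m ≤ i ∧ A (σ m) (σ l)}.ncard ≤ β * k →
      k + 1 ≤ {m : Fin n | l ≤ m ∧ m ≤ i ∧ A (σ l) (σ m) ∧ A (σ m) (σ i)}.ncard) := by
  classical
  have hdich : ∀ u v : Fin n, u ≠ v → (A (σ u) (σ v) ↔ ¬ A (σ v) (σ u)) := by
    intro u v huv
    exact hA.2 (σ u) (σ v) (fun h => huv (σ.injective h))
  have hlj' : (l : ℕ) < (j : ℕ) := hlj
  have hji' : (j : ℕ) ≤ (i : ℕ) := hji
  -- cardinalities of intervals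
  have cardX : {m : Fin n | l ≤ m ∧ m < j}.ncard = (j : ℕ) - (l : ℕ) := by
    have e : {m : Fin n | l ≤ m ∧ m < j} = ↑(Finset.Ico l j) := by
      ext m; simp [Finset.mem_Ico]
    rw [e, Set.ncard_coe_finset, Fin.card_Ico]
  have cardY : {m : Fin n | j ≤ m ∧ m ≤ i}.ncard = (i : ℕ) + 1 - (j : ℕ) := by
    have e : {m : Fin n | j ≤ m ∧ m ≤ i} = ↑(Finset.Icc j i) := by
      ext m; simp [Finset.mem_Icc]
    rw [e, Set.ncard_coe_finset, Fin.card_Icc]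
  -- X facts
  have hXcov : {m : Fin n | l ≤ m ∧ m < j}.ncard ≤
      {m : Fin n | l ≤ m ∧ m < j ∧ A (σ i) (σ m)}.ncard +
      {m : Fin n | l ≤ m ∧ m < j ∧ A (σ m) (σ i)}.ncard := by
    apply aux_cover_ncard
    intro m _ hm2
    have hmi : i ≠ m := by
      intro he; subst he; exact absurd (lt_of_lt_of_le hm2 hji) (lt_irrefl i)
    by_cases h : A (σ m) (σ i)
    · exact Or.inr h
    · exact Or.inl ((hdich i m hmi).2 h)
  have hXint := aux_inter_ncard (fun m => l ≤ m) (fun m => m < j)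
    (fun m => A (σ l) (σ m)) (fun m => A (σ m) (σ i))
  -- key X inequality
  have hkeyX : (j : ℕ) - (l : ℕ) - 1 ≤
      2 * {m : Fin n | l ≤ m ∧ m < j ∧ A (σ i) (σ m)}.ncard +
      2 * {m : Fin n | l ≤ m ∧ m < j ∧ A (σ l) (σ m) ∧ A (σ m) (σ i)}.ncard := by
    have hXsub : {m : Fin n | l ≤ m ∧ m < j ∧ A (σ l) (σ m)}.ncard +
        {m : Fin n | l ≤ m ∧ m < j ∧ A (σ m) (σ i)}.ncard ≤
        ((j : ℕ) - (l : ℕ)) +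
        {m : Fin n | l ≤ m ∧ m < j ∧ A (σ l) (σ m) ∧ A (σ m) (σ i)}.ncard := by
      rw [← cardX]; exact hXint
    omega
  -- Y facts
  have hYl : {m : Fin n | j ≤ m ∧ m ≤ i}.ncard ≤
      {m : Fin n | j ≤ m ∧ m ≤ i ∧ A (σ l) (σ m)}.ncard +
      {m : Fin n | j ≤ m ∧ m ≤ i ∧ A (σ m) (σ l)}.ncard := by
    apply aux_cover_ncard
    intro m hm1 _
    have hml : l ≠ m := by
      intro he; rw [← he] at hm1; exact absurd hm1 (not_le.2 hlj)
    by_cases h : A (σ m) (σ l)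
    · exact Or.inr h
    · exact Or.inl ((hdich l m hml).2 h)
  have hYi : {m : Fin n | j ≤ m ∧ m ≤ i}.ncard ≤
      {m : Fin n | j ≤ m ∧ m ≤ i ∧ A (σ m) (σ i)}.ncard +
      {m : Fin n | j ≤ m ∧ m ≤ i ∧ A (σ i) (σ m)}.ncard + 1 := by
    apply aux_cover_ncard' _ _ _ _ i
    intro m _ _
    by_cases he : m = i
    · exact Or.inr (Or.inr he)
    · by_cases h : A (σ i) (σ m)
      · exact Or.inr (Or.inl h)
      · exact Or.inl ((hdich m i he).2 h)
  have hYint := aux_inter_ncard (fun m => j ≤ m) (fun m => m ≤ i)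
    (fun m => A (σ l) (σ m)) (fun m => A (σ m) (σ i))
  have hkeyY : (i : ℕ) - (j : ℕ) ≤
      {m : Fin n | j ≤ m ∧ m ≤ i ∧ A (σ m) (σ l)}.ncard +
      {m : Fin n | j ≤ m ∧ m ≤ i ∧ A (σ i) (σ m)}.ncard +
      {m : Fin n | j ≤ m ∧ m ≤ i ∧ A (σ l) (σ m) ∧ A (σ m) (σ i)}.ncard := by
    have hexc : ∀ m : Fin n, j ≤ m → m ≤ i →
        ¬ (A (σ l) (σ m) ∧ A (σ m) (σ l)) := by
      intro m hm1 _ ⟨h1, h2⟩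
      have hml : l ≠ m := by
        intro he; rw [← he] at hm1; exact absurd hm1 (not_le.2 hlj)
      exact (hdich l m hml).1 h1 h2
    have hYsub : {m : Fin n | j ≤ m ∧ m ≤ i ∧ A (σ l) (σ m)}.ncard +
        {m : Fin n | j ≤ m ∧ m ≤ i ∧ A (σ m) (σ i)}.ncard ≤
        ((i : ℕ) + 1 - (j : ℕ)) +
        {m : Fin n | j ≤ m ∧ m ≤ i ∧ A (σ l) (σ m) ∧ A (σ m) (σ i)}.ncard := by
      rw [← cardY]; exact hYint
    omega
  refine ⟨?_, ?_, ?_⟩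
  · -- part 1, over ℚ
    have hc : ((j : ℚ)) = (((j : ℕ) : ℚ)) := rfl
    rw [hc]
    have h2 : ((j : ℕ) : ℚ) - ((l : ℕ) : ℚ) - 1 =
        (((j : ℕ) - (l : ℕ) - 1 : ℕ) : ℚ) := by
      have : (l : ℕ) + 1 ≤ (j : ℕ) := hlj'
      push_cast [Nat.cast_sub (by omega : (l : ℕ) ≤ (j : ℕ))]
      rw [Nat.cast_sub (by omega : 1 ≤ (j : ℕ) - (l : ℕ))]
      push_cast [Nat.cast_sub (by omega : (l : ℕ) ≤ (j : ℕ))]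
      ring
    rw [h2]
    have := hkeyX
    have hcast : (((j : ℕ) - (l : ℕ) - 1 : ℕ) : ℚ) ≤
        2 * ({m : Fin n | l ≤ m ∧ m < j ∧ A (σ i) (σ m)}.ncard : ℚ) +
        2 * ({m : Fin n | l ≤ m ∧ m < j ∧ A (σ l) (σ m) ∧ A (σ m) (σ i)}.ncard : ℚ) := by
      exact_mod_cast hkeyX
    linarith
  · -- part 2, over ℕ
    omega
  · -- part 3
    intro h1 h2
    have hJ : {m : Fin n | l ≤ m ∧ m < j ∧ A (σ l) (σ m) ∧ A (σ m) (σ i)}.ncard +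
        {m : Fin n | j ≤ m ∧ m ≤ i ∧ A (σ l) (σ m) ∧ A (σ m) (σ i)}.ncard ≤
        {m : Fin n | l ≤ m ∧ m ≤ i ∧ A (σ l) (σ m) ∧ A (σ m) (σ i)}.ncard := by
      rw [← Set.ncard_union_eq ?_ (Set.toFinite _) (Set.toFinite _)]
      · apply Set.ncard_le_ncard _ (Set.toFinite _)
        rintro m (⟨ha, hb, hc⟩ | ⟨ha, hb, hc⟩)
        · exact ⟨ha, le_trans (le_of_lt hb) hji, hc⟩
        · exact ⟨le_trans (le_of_lt hlj) ha, hb, hc⟩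
      · rw [Set.disjoint_left]
        rintro m ⟨_, hb, _⟩ ⟨hc, _, _⟩
        exact absurd (lt_of_le_of_lt hc hb) (lt_irrefl j)
    have he : 2 * (β + 1) * k = 2 * (β * k) + 2 * k := by ring
    rw [he] at h1
    omega
end

section
/- If a vertex v of a tournament D with terminal set T lies on no T-cycle, then S is a (T \ {v})-feedback arc set of D − v if and only if S ∩ A(D − v) = S and S is a T-feedback arc set of D; in particular (D, T, k) is a YES-instance if and only if (D − v, T \ {v}, k) is. -/
lemma chain_prop {V : Type} {R : V → V → Prop} {P : V → Prop}
    (h : ∀ x y, R x y → P x ∧ P y) :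
    ∀ (l : List V) (a : V), l ≠ [] → List.Chain R a l → P a ∧ ∀ x ∈ l, P x := by
  intro l
  induction l with
  | nil => intro a h1; exact absurd rfl h1
  | cons b l' ih =>
    intro a _ hc
    simp only [List.Chain, List.isChain_cons_cons] at hc
    obtain ⟨hab, hc'⟩ := hc
    obtain ⟨Pa, Pb⟩ := h a b hab
    refine ⟨Pa, ?_⟩
    intro x hx
    rcases List.mem_cons.mp hx with rfl | hx
    · exact Pb
    · rcases eq_or_ne l' [] with rfl | hne
      · simp at hx
      · exact (ih b hne hc').2 x hx

lemma chain_strengthen {V : Type} {R R' : V → V → Prop} {P : V → Prop}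
    (h : ∀ x y, R x y → P x → P y → R' x y) :
    ∀ (l : List V) (a : V), List.Chain R a l → P a → (∀ x ∈ l, P x) →
      List.Chain R' a l := by
  intro l
  induction l with
  | nil => intro a _ _ _; exact List.Chain.nil
  | cons b l' ih =>
    intro a hc Pa Pall
    simp only [List.Chain, List.isChain_cons_cons] at hc ⊢
    have Pb : P b := Pall b List.mem_cons_self
    exact ⟨h a b hc.1 Pa Pb, ih b hc.2 Pb fun x hx => Pall x (List.mem_cons_of_mem _ hx)⟩

/-- if a vertex `v` lies on no `T`-cycle, then `S` is a `(T \ {v})`-feedback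
arc set of `D - v` iff `S` avoids all arcs incident to `v` and `S` is a `T`-feedback arc
set of `D`; in particular `(D, T, k)` is a YES-instance iff `(D - v, T \ {v}, k)` is. -/
theorem stmt18 {n : ℕ} (A : Fin n → Fin n → Prop) (hA : IsTournament A)
    (T : Set (Fin n)) (v : Fin n) (k : ℕ)
    (hv : ¬ ∃ (w : Fin n) (c : List (Fin n)), List.Chain A w (c ++ [w]) ∧
      (w = v ∨ v ∈ c) ∧ (w ∈ T ∨ ∃ t ∈ c, t ∈ T)) :
    (∀ S : Set (Fin n × Fin n),
      IsTFAS (fun x y => A x y ∧ x ≠ v ∧ y ≠ v) (T \ {v}) S ↔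
        ((∀ e ∈ S, e.1 ≠ v ∧ e.2 ≠ v) ∧ IsTFAS A T S)) ∧
    ((∃ S : Set (Fin n × Fin n), IsTFAS A T S ∧ S.ncard ≤ k) ↔
      ∃ S : Set (Fin n × Fin n),
        IsTFAS (fun x y => A x y ∧ x ≠ v ∧ y ≠ v) (T \ {v}) S ∧ S.ncard ≤ k) := by
  -- key: no T-cycle in D - S' avoiding v for appropriate S'
  have key : ∀ S : Set (Fin n × Fin n),
      ¬ HasTCycle (fun u w => A u w ∧ (u, w) ∉ S) T →
      ¬ HasTCycle (fun u w => (A u w ∧ u ≠ v ∧ w ≠ v) ∧ (u, w) ∉ S) (T \ {v}) := by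
    intro S hS ⟨w, c, hc, hT⟩
    exact hS ⟨w, c, List.Chain.imp (fun x y h => ⟨h.1.1, h.2⟩) hc,
      hT.imp (fun h => h.1) (fun ⟨t, ht, ht2⟩ => ⟨t, ht, ht2.1⟩)⟩
  have part1 : ∀ S : Set (Fin n × Fin n),
      IsTFAS (fun x y => A x y ∧ x ≠ v ∧ y ≠ v) (T \ {v}) S ↔
        ((∀ e ∈ S, e.1 ≠ v ∧ e.2 ≠ v) ∧ IsTFAS A T S) := by
    intro S
    constructor
    · rintro ⟨h1, h2⟩
      refine ⟨fun e he => (h1 e he).2, fun e he => (h1 e he).1, ?_⟩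
      rintro ⟨w, c, hc, hT⟩
      by_cases hvin : w = v ∨ v ∈ c
      · exact hv ⟨w, c, List.Chain.imp (fun x y h => h.1) hc, hvin, hT⟩
      · push_neg at hvin
        have Pall : ∀ x ∈ c ++ [w], x ≠ v := by
          intro x hx
          rcases List.mem_append.mp hx with hx | hx
          · exact fun h => hvin.2 (h ▸ hx)
          · simp at hx; exact hx ▸ hvin.1
        have hc' : List.Chain
            (fun u w' => (A u w' ∧ u ≠ v ∧ w' ≠ v) ∧ (u, w') ∉ S) w (c ++ [w]) :=
          chain_strengthen (fun x y h px py => ⟨⟨h.1, px, py⟩, h.2⟩)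
            (c ++ [w]) w hc hvin.1 Pall
        refine h2 ⟨w, c, hc', ?_⟩
        refine hT.imp (fun h => ⟨h, hvin.1⟩) (fun ⟨t, ht, ht2⟩ => ⟨t, ht, ht2, ?_⟩)
        exact Pall t (List.mem_append.mpr (Or.inl ht))
    · rintro ⟨h1, h2, h3⟩
      exact ⟨fun e he => ⟨h2 e he, h1 e he⟩, key S h3⟩
  refine ⟨part1, ?_⟩
  constructor
  · rintro ⟨S, hS, hk⟩
    refine ⟨{e ∈ S | e.1 ≠ v ∧ e.2 ≠ v}, ?_, le_trans
      (Set.ncard_le_ncard (Set.sep_subset _ _) (Set.toFinite _)) hk⟩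
    refine (part1 _).mpr ⟨fun e he => he.2, fun e he => hS.1 e he.1, ?_⟩
    rintro ⟨w, c, hc, hT⟩
    by_cases hvin : w = v ∨ v ∈ c
    · exact hv ⟨w, c, List.Chain.imp (fun x y h => h.1) hc, hvin, hT⟩
    · push_neg at hvin
      have Pall : ∀ x ∈ c ++ [w], x ≠ v := by
        intro x hx
        rcases List.mem_append.mp hx with hx | hx
        · exact fun h => hvin.2 (h ▸ hx)
        · simp at hx; exact hx ▸ hvin.1
      have hc' : List.Chain (fun u w' => A u w' ∧ (u, w') ∉ S) w (c ++ [w]) := by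
        refine chain_strengthen (fun x y h px py => ⟨h.1, fun hmem => h.2 ⟨hmem, px, py⟩⟩)
          (c ++ [w]) w hc hvin.1 Pall
      exact hS.2 ⟨w, c, hc', hT⟩
  · rintro ⟨S, hS, hk⟩
    exact ⟨S, ((part1 S).mp hS).2, hk⟩
end
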